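/- arXiv:math-ph/0210054 — 7 statements merged into one kernel-verified Lean document; each statement's English description precedes it below -/
import Mathlib

section
/- Fix k ∈ (0,π), a potential V : ℤ⁺ → ℝ, and set E = 2cos(k). There exist constants c₁, c₂ > 0, depending only on k and V(1), such that for every not-identically-zero solution u for energy E with EFGP transform (R,θ) and every integer L ≥ 2, one has c₁‖u‖_L ≤ ‖R‖_L ≤ c₂‖u‖_L. -/
/-- A sequence `u : ℤ≥0 → ℝ` is a solution for energy `E` (with potential `V` on `ℤ⁺`) if
`u(x+1) + u(x−1) + V(x)u(x) = E·u(x)` for all `x ≥ 1`. -/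
def IsSolution (V : ℕ → ℝ) (E : ℝ) (u : ℕ → ℝ) : Prop :=
  ∀ x : ℕ, 1 ≤ x → u (x + 1) + u (x - 1) + V x * u x = E * u x

/-- `(R, θ)` is the EFGP transform of `u` for `k ∈ (0, π)`: for all `x ≥ 1`, `R(x) > 0`,
`u(x) − cos(k)·u(x−1) = R(x)cos(θ(x))` and `sin(k)·u(x−1) = R(x)sin(θ(x))`. -/
def IsEFGP (k : ℝ) (u R θ : ℕ → ℝ) : Prop :=
  ∀ x : ℕ, 1 ≤ x → 0 < R x ∧
    u x - Real.cos k * u (x - 1) = R x * Real.cos (θ x) ∧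
    Real.sin k * u (x - 1) = R x * Real.sin (θ x)

/-- `‖w‖_L = (Σ_{x=1}^{L} w(x)²)^{1/2}`. -/
noncomputable def normL (w : ℕ → ℝ) (L : ℕ) : ℝ :=
  Real.sqrt (∑ x ∈ Finset.Icc 1 L, (w x) ^ 2)

set_option maxHeartbeats 1000000 in
/-- Fix `k ∈ (0, π)` and set `E = 2cos k`. There exist constants
`c₁, c₂ > 0`, depending only on `k` and `V(1)`, such that for every potential `V` with the
given value at `1`, every not-identically-zero solution `u` for energy `E` with EFGP
transform `(R, θ)`, and every integer `L ≥ 2`, one has `c₁‖u‖_L ≤ ‖R‖_L ≤ c₂‖u‖_L`. -/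
theorem stmt_0 (k : ℝ) (hk : k ∈ Set.Ioo 0 Real.pi) (v1 : ℝ) :
    ∃ c₁ c₂ : ℝ, 0 < c₁ ∧ 0 < c₂ ∧
      ∀ V : ℕ → ℝ, V 1 = v1 →
        ∀ u R θ : ℕ → ℝ, IsSolution V (2 * Real.cos k) u → IsEFGP k u R θ →
          (∃ x, u x ≠ 0) →
          ∀ L : ℕ, 2 ≤ L →
            c₁ * normL u L ≤ normL R L ∧ normL R L ≤ c₂ * normL u L := by
  obtain ⟨hk0, hkπ⟩ := hk
  have hs : 0 < Real.sin k := Real.sin_pos_of_pos_of_lt_pi hk0 hkπ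
  set c := Real.cos k with hc
  have hpyth : Real.sin k ^ 2 + c ^ 2 = 1 := Real.sin_sq_add_cos_sq k
  have hc1 : |c| < 1 := by
    rw [← sq_lt_one_iff_abs_lt_one]
    nlinarith
  clear_value c
  set M : ℝ := 2 * (2 * c - v1) ^ 2 + 2 with hM
  have hM2 : (2:ℝ) ≤ M := by nlinarith [sq_nonneg (2 * c - v1)]
  clear_value M
  refine ⟨Real.sqrt (1 - |c|), Real.sqrt (4 + 2 * M),
    Real.sqrt_pos.mpr (by linarith), Real.sqrt_pos.mpr (by linarith), ?_⟩
  intro V hV u R θ hsol hE _ L hL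
  set S := ∑ x ∈ Finset.Icc 1 L, u x ^ 2 with hSdef
  have hS0 : 0 ≤ S := Finset.sum_nonneg fun x _ => sq_nonneg _
  clear_value S
  -- key pointwise identity
  have hRid : ∀ x ∈ Finset.Icc 1 L, R x ^ 2 = u x ^ 2 + u (x - 1) ^ 2 - 2 * c * u x * u (x - 1) := by
    intro x hx
    rw [Finset.mem_Icc] at hx
    obtain ⟨_, h1, h2⟩ := hE x hx.1
    have ht : Real.sin (θ x) ^ 2 + Real.cos (θ x) ^ 2 = 1 := Real.sin_sq_add_cos_sq (θ x)
    rw [← hc] at h1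
    linear_combination (-(u x - c * u (x - 1) + R x * Real.cos (θ x))) * h1 +
      (-(Real.sin k * u (x - 1) + R x * Real.sin (θ x))) * h2 -
      R x ^ 2 * ht + u (x - 1) ^ 2 * hpyth
  -- T ≤ u 0 ^ 2 + S
  have hTeq : ∑ x ∈ Finset.Icc 1 L, u (x - 1) ^ 2 = ∑ x ∈ Finset.Icc 0 (L - 1), u x ^ 2 := by
    apply Finset.sum_nbij' (fun x => x - 1) (fun x => x + 1) <;>
      intros <;> simp_all [Finset.mem_Icc] <;> omega
  have hT : ∑ x ∈ Finset.Icc 1 L, u (x - 1) ^ 2 ≤ u 0 ^ 2 + S := by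
    rw [hTeq]
    have hins : Finset.Icc 0 (L - 1) ⊆ insert 0 (Finset.Icc 1 L) := by
      intro x hx
      simp only [Finset.mem_Icc, Finset.mem_insert] at *
      omega
    calc ∑ x ∈ Finset.Icc 0 (L - 1), u x ^ 2
        ≤ ∑ x ∈ insert 0 (Finset.Icc 1 L), u x ^ 2 :=
          Finset.sum_le_sum_of_subset_of_nonneg hins (fun x _ _ => sq_nonneg _)
      _ = u 0 ^ 2 + S := by
          rw [Finset.sum_insert (by simp), hSdef]
  -- bound u 0 ^ 2
  have h12 : u 1 ^ 2 + u 2 ^ 2 ≤ S := by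
    rw [hSdef]
    have hsub : ({1, 2} : Finset ℕ) ⊆ Finset.Icc 1 L := by
      intro x hx
      simp only [Finset.mem_insert, Finset.mem_singleton, Finset.mem_Icc] at *
      omega
    have := Finset.sum_le_sum_of_subset_of_nonneg hsub
      (fun x _ _ => sq_nonneg (u x))
    simpa using this
  have hu0 : u 0 ^ 2 ≤ M * S := by
    have hrec := hsol 1 le_rfl
    simp only [hV] at hrec
    have h0 : u 0 = (2 * c - v1) * u 1 - u 2 := by
      norm_num at hrec ⊢
      linarith
    have : u 0 ^ 2 ≤ 2 * (2 * c - v1) ^ 2 * u 1 ^ 2 + 2 * u 2 ^ 2 := by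
      rw [h0]; nlinarith [sq_nonneg ((2 * c - v1) * u 1 + u 2)]
    nlinarith [sq_nonneg (u 1), sq_nonneg (u 2), sq_nonneg (2 * c - v1)]
  -- sum of R^2
  have hRlow : (1 - |c|) * S ≤ ∑ x ∈ Finset.Icc 1 L, R x ^ 2 := by
    rw [hSdef, Finset.mul_sum]
    apply Finset.sum_le_sum
    intro x hx
    rw [hRid x hx]
    nlinarith [sq_nonneg (u x + u (x - 1)), sq_nonneg (u x - u (x - 1)),
      neg_abs_le c, le_abs_self c, abs_nonneg c, sq_nonneg (u (x - 1))]
  have hRhigh : ∑ x ∈ Finset.Icc 1 L, R x ^ 2 ≤ (4 + 2 * M) * S := by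
    have step : ∑ x ∈ Finset.Icc 1 L, R x ^ 2 ≤
        ∑ x ∈ Finset.Icc 1 L, (2 * (u x ^ 2 + u (x - 1) ^ 2)) := by
      apply Finset.sum_le_sum
      intro x hx
      rw [hRid x hx]
      nlinarith [sq_nonneg (u x + u (x - 1)), sq_nonneg (u x - u (x - 1)),
        neg_abs_le c, le_abs_self c, hc1.le]
    have : ∑ x ∈ Finset.Icc 1 L, (2 * (u x ^ 2 + u (x - 1) ^ 2)) =
        2 * S + 2 * ∑ x ∈ Finset.Icc 1 L, u (x - 1) ^ 2 := by
      rw [Finset.sum_congr rfl (fun x _ => mul_add 2 (u x ^ 2) (u (x - 1) ^ 2)),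
        Finset.sum_add_distrib, ← Finset.mul_sum, ← Finset.mul_sum, hSdef]
    nlinarith
  constructor
  · have : Real.sqrt (1 - |c|) * normL u L = Real.sqrt ((1 - |c|) * S) := by
      rw [normL, ← hSdef, Real.sqrt_mul (by linarith : (0:ℝ) ≤ 1 - |c|) S]
    rw [this, normL]
    exact Real.sqrt_le_sqrt hRlow
  · have : Real.sqrt (4 + 2 * M) * normL u L = Real.sqrt ((4 + 2 * M) * S) := by
      rw [normL, ← hSdef, Real.sqrt_mul (by linarith : (0:ℝ) ≤ 4 + 2 * M) S]
    rw [this, normL]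
    exact Real.sqrt_le_sqrt hRhigh
end

section
/- For every real δ with 0 ≤ δ ≤ 1/2, one has (1/2 − δ)^{1/2 − δ}·(1/2 + δ)^{1/2 + δ} ≥ (1/2)·e^{2δ²}, with the convention 0⁰ = 1 at δ = 1/2. -/
/-- The key entropy inequality: for `0 ≤ x < 1`,
`x^2 ≤ (1-x)*log(1-x) + (1+x)*log(1+x)`. -/
lemma key_ineq (x : ℝ) (hx0 : 0 ≤ x) (hx1 : x < 1) :
    x ^ 2 ≤ (1 - x) * Real.log (1 - x) + (1 + x) * Real.log (1 + x) := by
  -- g y = log(1+y) - log(1-y) - 2y is nonneg on [0,1)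
  set g : ℝ → ℝ := fun y => Real.log (1 + y) - Real.log (1 - y) - 2 * y with hg
  have hgd : ∀ y ∈ Set.Ioo (0:ℝ) 1,
      HasDerivAt g (1 / (1 + y) + 1 / (1 - y) - 2) y := by
    intro y hy
    have hy1 : (0:ℝ) < 1 + y := by linarith [hy.1]
    have hy2 : (0:ℝ) < 1 - y := by linarith [hy.2]
    have h1 : HasDerivAt (fun z : ℝ => 1 + z) 1 y := by
      simpa using (hasDerivAt_id y).const_add (1:ℝ)
    have h2 : HasDerivAt (fun z : ℝ => 1 - z) (-1) y := by
      simpa using (hasDerivAt_id y).const_sub (1:ℝ)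
    have hl1 := h1.log hy1.ne'
    have hl2 := h2.log hy2.ne'
    have h3 : HasDerivAt (fun z : ℝ => 2 * z) 2 y := by
      simpa using (hasDerivAt_id y).const_mul (2:ℝ)
    have := (hl1.sub hl2).sub h3
    refine this.congr_deriv ?_
    ring
  have hgc : ContinuousOn g (Set.Ico (0:ℝ) 1) := by
    apply ContinuousOn.sub
    · apply ContinuousOn.sub
      · apply (Real.continuousOn_log.comp (by fun_prop))
        intro y hy
        simp only [Set.mem_Ico] at hy
        have : (0:ℝ) < 1 + y := by linarith [hy.1]
        simp [Set.mem_compl_iff, this.ne']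
      · apply (Real.continuousOn_log.comp (by fun_prop))
        intro y hy
        simp only [Set.mem_Ico] at hy
        have : (0:ℝ) < 1 - y := by linarith [hy.2]
        simp [Set.mem_compl_iff, this.ne']
    · fun_prop
  have hgmono : MonotoneOn g (Set.Ico (0:ℝ) 1) := by
    apply monotoneOn_of_deriv_nonneg (convex_Ico 0 1) hgc
    · intro y hy
      rw [interior_Ico] at hy
      exact (hgd y hy).differentiableAt.differentiableWithinAt
    · intro y hy
      rw [interior_Ico] at hy
      rw [(hgd y hy).deriv]
      have hy1 : (0:ℝ) < 1 + y := by linarith [hy.1]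
      have hy2 : (0:ℝ) < 1 - y := by linarith [hy.2]
      rw [div_add_div _ _ hy1.ne' hy2.ne', sub_nonneg, le_div_iff₀ (by positivity)]
      nlinarith [sq_nonneg y]
  have hgnonneg : ∀ y ∈ Set.Ico (0:ℝ) 1, 0 ≤ g y := by
    intro y hy
    have h0 : g 0 = 0 := by simp [hg]
    have := hgmono (Set.mem_Ico.mpr ⟨le_refl 0, one_pos⟩) hy hy.1
    linarith [h0 ▸ this]
  -- f y = (1-y)log(1-y) + (1+y)log(1+y) - y^2 is nonneg on [0,1)
  set f : ℝ → ℝ := fun y => (1 - y) * Real.log (1 - y) + (1 + y) * Real.log (1 + y) - y ^ 2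
    with hf
  have hfd : ∀ y ∈ Set.Ioo (0:ℝ) 1, HasDerivAt f (g y) y := by
    intro y hy
    have hy1 : (0:ℝ) < 1 + y := by linarith [hy.1]
    have hy2 : (0:ℝ) < 1 - y := by linarith [hy.2]
    have h1 : HasDerivAt (fun z : ℝ => 1 + z) 1 y := by
      simpa using (hasDerivAt_id y).const_add (1:ℝ)
    have h2 : HasDerivAt (fun z : ℝ => 1 - z) (-1) y := by
      simpa using (hasDerivAt_id y).const_sub (1:ℝ)
    have hm1 := h2.mul (h2.log hy2.ne')
    have hm2 := h1.mul (h1.log hy1.ne')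
    have hp : HasDerivAt (fun z : ℝ => z ^ 2) (2 * y) y := by
      simpa using hasDerivAt_pow 2 y
    have := (hm1.add hm2).sub hp
    refine this.congr_deriv ?_
    simp only [hg]
    field_simp
    ring
  have hfc : ContinuousOn f (Set.Ico (0:ℝ) 1) := by
    apply ContinuousOn.sub
    · apply ContinuousOn.add
      · apply ContinuousOn.mul (by fun_prop)
        apply (Real.continuousOn_log.comp (by fun_prop))
        intro y hy
        simp only [Set.mem_Ico] at hy
        have : (0:ℝ) < 1 - y := by linarith [hy.2]
        simp [Set.mem_compl_iff, this.ne']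
      · apply ContinuousOn.mul (by fun_prop)
        apply (Real.continuousOn_log.comp (by fun_prop))
        intro y hy
        simp only [Set.mem_Ico] at hy
        have : (0:ℝ) < 1 + y := by linarith [hy.1]
        simp [Set.mem_compl_iff, this.ne']
    · fun_prop
  have hfmono : MonotoneOn f (Set.Ico (0:ℝ) 1) := by
    apply monotoneOn_of_deriv_nonneg (convex_Ico 0 1) hfc
    · intro y hy
      rw [interior_Ico] at hy
      exact (hfd y hy).differentiableAt.differentiableWithinAt
    · intro y hy
      rw [interior_Ico] at hy
      rw [(hfd y hy).deriv]
      exact hgnonneg y ⟨le_of_lt hy.1, hy.2⟩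
  have hf0 : f 0 = 0 := by simp [hf]
  have := hfmono (Set.mem_Ico.mpr ⟨le_refl 0, one_pos⟩) ⟨hx0, hx1⟩ hx0
  rw [hf0] at this
  simp only [hf] at this
  linarith

/-- For every real `δ` with `0 ≤ δ ≤ 1/2`,
`(1/2 - δ)^(1/2 - δ) · (1/2 + δ)^(1/2 + δ) ≥ (1/2) · e^(2δ²)`,
where `^` is the real power (`Real.rpow`), with the convention `0 ^ 0 = 1` at `δ = 1/2`
(which is the convention built into `Real.rpow`). -/
theorem stmt_7 (δ : ℝ) (h0 : 0 ≤ δ) (h1 : δ ≤ 1 / 2) :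
    (1 / 2 : ℝ) * Real.exp (2 * δ ^ 2)
      ≤ ((1 / 2 : ℝ) - δ) ^ ((1 / 2 : ℝ) - δ) * ((1 / 2 : ℝ) + δ) ^ ((1 / 2 : ℝ) + δ) := by
  rcases eq_or_lt_of_le h1 with heq | hlt
  · subst heq
    norm_num
    have he : Real.exp (1/2 : ℝ) ≤ 2 := by
      have h2 : Real.exp (1/2 : ℝ) ^ 2 = Real.exp 1 := by
        rw [← Real.exp_nat_mul]; norm_num
      nlinarith [Real.exp_pos (1/2 : ℝ), Real.exp_one_lt_d9]
    linarith
  · have ha : (0:ℝ) < 1/2 - δ := by linarith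
    have hb : (0:ℝ) < 1/2 + δ := by linarith
    rw [Real.rpow_def_of_pos ha, Real.rpow_def_of_pos hb, ← Real.exp_add]
    have hhalf : (1/2 : ℝ) = Real.exp (Real.log (1/2)) := (Real.exp_log (by norm_num)).symm
    nth_rewrite 1 [hhalf]
    rw [← Real.exp_add, Real.exp_le_exp]
    have key := key_ineq (2 * δ) (by linarith) (by linarith)
    have e1 : Real.log (1/2 - δ) = Real.log (1 - 2*δ) + Real.log (1/2) := by
      rw [← Real.log_mul (by linarith) (by norm_num)]
      ring_nf
    have e2 : Real.log (1/2 + δ) = Real.log (1 + 2*δ) + Real.log (1/2) := by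
      rw [← Real.log_mul (by linarith) (by norm_num)]
      ring_nf
    rw [e1, e2]
    nlinarith [key]
end

section
/- Let ε > 0 and define X̃_n(k) = sgn(sin(2ⁿπk)) for k ∈ [0,1], with the convention sgn(0) = 1. Then the set {k ∈ [0,1] : limsup_{N→∞} |(1/N)Σ_{n=1}^{N} X̃_n(k)| > ε} has α-dimensional Hausdorff measure zero for every α ∈ (0,1) with 2^{1−α}e^{−ε²/2} < 1; in particular its Hausdorff dimension is at most max{0, 1 − ε²/(2·ln 2)}. -/
open Filter MeasureTheory Finset Topology ENNReal

/-- `sgn(t)` equals `1` for `t ≥ 0` (so in particular `sgn 0 = 1`) and `−1` for `t < 0`. -/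
noncomputable def sgn' (t : ℝ) : ℝ := if 0 ≤ t then 1 else -1

/-- `X̃_n(k) = sgn(sin(2ⁿπk))`, with the convention `sgn 0 = 1`. -/
noncomputable def Xtilde (n : ℕ) (k : ℝ) : ℝ := sgn' (Real.sin (2 ^ n * Real.pi * k))

namespace Stmt8

noncomputable def e (m : ℕ) : ℝ := if Even m then 1 else -1

noncomputable def T (N j : ℕ) : ℝ := ∑ i ∈ Finset.range N, e (j / 2 ^ i)

lemma key (a b : ℝ) : ∀ N : ℕ, ∑ j ∈ Finset.range (2 ^ N),
    ∏ i ∈ Finset.range N, (if Even (j / 2 ^ i) then a else b) = (a + b) ^ N := by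
  intro N
  induction N with
  | zero => simp
  | succ N ih =>
    have h2 : 2 ^ (N + 1) = 2 ^ N + 2 ^ N := by ring
    rw [h2, Finset.sum_range_add]
    have hA : ∑ j ∈ Finset.range (2 ^ N),
        ∏ i ∈ Finset.range (N + 1), (if Even (j / 2 ^ i) then a else b)
        = (a + b) ^ N * a := by
      rw [show ∑ j ∈ Finset.range (2 ^ N),
          ∏ i ∈ Finset.range (N + 1), (if Even (j / 2 ^ i) then a else b)
          = ∑ j ∈ Finset.range (2 ^ N),
          (∏ i ∈ Finset.range N, (if Even (j / 2 ^ i) then a else b)) * a from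
        Finset.sum_congr rfl fun j hj => by
          rw [Finset.prod_range_succ, Nat.div_eq_of_lt (Finset.mem_range.1 hj)]
          simp, ← Finset.sum_mul, ih]
    have hB : ∑ j ∈ Finset.range (2 ^ N),
        ∏ i ∈ Finset.range (N + 1), (if Even ((2 ^ N + j) / 2 ^ i) then a else b)
        = (a + b) ^ N * b := by
      rw [show ∑ j ∈ Finset.range (2 ^ N),
          ∏ i ∈ Finset.range (N + 1), (if Even ((2 ^ N + j) / 2 ^ i) then a else b)
          = ∑ j ∈ Finset.range (2 ^ N),
          (∏ i ∈ Finset.range N, (if Even (j / 2 ^ i) then a else b)) * b from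
        Finset.sum_congr rfl fun j hj => ?_, ← Finset.sum_mul, ih]
      rw [Finset.prod_range_succ]
      have hj' : j < 2 ^ N := Finset.mem_range.1 hj
      have hNdiv : (2 ^ N + j) / 2 ^ N = 1 := by
        rw [add_comm, Nat.add_div_right _ (by positivity : 0 < 2 ^ N),
          Nat.div_eq_of_lt hj']
      rw [hNdiv]
      have hmain : ∀ i ∈ Finset.range N,
          (if Even ((2 ^ N + j) / 2 ^ i) then a else b)
            = (if Even (j / 2 ^ i) then a else b) := by
        intro i hi
        have hiN : i < N := Finset.mem_range.1 hi
        have hpow : 2 ^ N = 2 ^ (N - i) * 2 ^ i := by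
          rw [← pow_add]; congr 1; omega
        have hdiv : (2 ^ N + j) / 2 ^ i = j / 2 ^ i + 2 ^ (N - i) := by
          rw [add_comm (2 ^ N) j, hpow, Nat.add_mul_div_right _ _ (by positivity : 0 < 2 ^ i)]
        have heven : Even ((2 ^ N + j) / 2 ^ i) ↔ Even (j / 2 ^ i) := by
          rw [hdiv, Nat.even_add]
          have : Even (2 ^ (N - i)) := by
            refine (Nat.even_pow).2 ⟨even_two, ?_⟩; omega
          tauto
        simp only [heven]
      rw [Finset.prod_congr rfl hmain]
      simp [Nat.not_even_one]
    rw [hA, hB]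
    ring

lemma chernoff_sum (t : ℝ) (N : ℕ) :
    ∑ j ∈ Finset.range (2 ^ N), Real.exp (t * T N j)
      = (Real.exp t + Real.exp (-t)) ^ N := by
  rw [← key (Real.exp t) (Real.exp (-t)) N]
  refine Finset.sum_congr rfl fun j _ => ?_
  rw [T, Finset.mul_sum, Real.exp_sum]
  refine Finset.prod_congr rfl fun i _ => ?_
  unfold e
  split_ifs <;> simp

noncomputable def Bad (ε : ℝ) (N : ℕ) : Finset ℕ :=
  (Finset.range (2 ^ N)).filter fun j => ε * N < |T N j|

lemma card_Bad_le (ε : ℝ) (hε : 0 < ε) (N : ℕ) :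
    ((Bad ε N).card : ℝ) ≤ 2 * 2 ^ N * Real.exp (-(ε ^ 2) / 2) ^ N := by
  have h1 : ∀ j ∈ Bad ε N,
      Real.exp (ε ^ 2 * N) ≤ Real.exp (ε * T N j) + Real.exp (-ε * T N j) := by
    intro j hj
    have hj2 : ε * N < |T N j| := (Finset.mem_filter.1 hj).2
    have h3 : ε ^ 2 * N ≤ ε * |T N j| := by nlinarith [hε.le]
    calc Real.exp (ε ^ 2 * N) ≤ Real.exp (ε * |T N j|) := Real.exp_le_exp.2 h3
      _ ≤ Real.exp (ε * T N j) + Real.exp (-ε * T N j) := by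
        rcases abs_cases (T N j) with ⟨h, _⟩ | ⟨h, _⟩
        · rw [h]
          exact le_add_of_nonneg_right (Real.exp_pos _).le
        · rw [h, mul_neg, ← neg_mul]
          exact le_add_of_nonneg_left (Real.exp_pos _).le
  have hkey : ((Bad ε N).card : ℝ) * Real.exp (ε ^ 2 * N)
      ≤ 2 * (Real.exp ε + Real.exp (-ε)) ^ N := by
    calc ((Bad ε N).card : ℝ) * Real.exp (ε ^ 2 * N)
        = ∑ _j ∈ Bad ε N, Real.exp (ε ^ 2 * N) := by
          rw [Finset.sum_const, nsmul_eq_mul]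
      _ ≤ ∑ j ∈ Bad ε N, (Real.exp (ε * T N j) + Real.exp (-ε * T N j)) :=
          Finset.sum_le_sum h1
      _ ≤ ∑ j ∈ Finset.range (2 ^ N),
            (Real.exp (ε * T N j) + Real.exp (-ε * T N j)) :=
          Finset.sum_le_sum_of_subset_of_nonneg (Finset.filter_subset _ _)
            (fun j _ _ => by positivity)
      _ = (Real.exp ε + Real.exp (-ε)) ^ N + (Real.exp (-ε) + Real.exp (-(-ε))) ^ N := by
          rw [Finset.sum_add_distrib, chernoff_sum]
          congr 1
          exact chernoff_sum (-ε) N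
      _ = 2 * (Real.exp ε + Real.exp (-ε)) ^ N := by
          rw [neg_neg, add_comm (Real.exp (-ε))]; ring
  have hA : Real.exp ε + Real.exp (-ε) ≤ 2 * Real.exp (ε ^ 2 / 2) := by
    have h := Real.cosh_le_exp_half_sq ε
    rw [Real.cosh_eq] at h
    linarith
  have hApow : (Real.exp ε + Real.exp (-ε)) ^ N ≤ 2 ^ N * Real.exp (ε ^ 2 / 2) ^ N := by
    calc (Real.exp ε + Real.exp (-ε)) ^ N ≤ (2 * Real.exp (ε ^ 2 / 2)) ^ N :=
        pow_le_pow_left₀ (by positivity) hA N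
      _ = 2 ^ N * Real.exp (ε ^ 2 / 2) ^ N := mul_pow _ _ _
  have hexp : Real.exp (ε ^ 2 / 2) ^ N = Real.exp (-(ε ^ 2) / 2) ^ N * Real.exp (ε ^ 2 * N) := by
    rw [← Real.exp_nat_mul, ← Real.exp_nat_mul, ← Real.exp_add]
    ring_nf
  have h2 : ((Bad ε N).card : ℝ) * Real.exp (ε ^ 2 * N)
      ≤ (2 * 2 ^ N * Real.exp (-(ε ^ 2) / 2) ^ N) * Real.exp (ε ^ 2 * N) := by
    calc ((Bad ε N).card : ℝ) * Real.exp (ε ^ 2 * N)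
        ≤ 2 * (Real.exp ε + Real.exp (-ε)) ^ N := hkey
      _ ≤ 2 * (2 ^ N * Real.exp (ε ^ 2 / 2) ^ N) := by linarith
      _ = (2 * 2 ^ N * Real.exp (-(ε ^ 2) / 2) ^ N) * Real.exp (ε ^ 2 * N) := by
          rw [hexp]; ring
  exact (mul_le_mul_iff_left₀ (Real.exp_pos _)).1 h2


lemma Xtilde_eq {k : ℝ} {n : ℕ} (h : (⌊2 ^ n * k⌋₊ : ℝ) < 2 ^ n * k) :
    Xtilde n k = e ⌊2 ^ n * k⌋₊ := by
  set x : ℝ := 2 ^ n * k with hx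
  set m : ℕ := ⌊x⌋₊ with hm
  have hlt : x < m + 1 := Nat.lt_floor_add_one x
  have hf0 : 0 < x - m := by simpa using sub_pos.2 h
  have hf1 : x - m < 1 := by linarith
  have harg : 2 ^ n * Real.pi * k = (x - (m : ℝ)) * Real.pi + (m : ℕ) * Real.pi := by
    rw [hx]; push_cast; ring
  have hsin : Real.sin (2 ^ n * Real.pi * k) = (-1) ^ m * Real.sin ((x - m) * Real.pi) := by
    rw [harg, Real.sin_add_nat_mul_pi]
  have hpos : 0 < Real.sin ((x - m) * Real.pi) :=
    Real.sin_pos_of_pos_of_lt_pi (by positivity)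
      (by nlinarith [Real.pi_pos])
  unfold Xtilde sgn'
  rw [hsin]
  rcases Nat.even_or_odd m with he | ho
  · rw [he.neg_one_pow, one_mul, if_pos hpos.le]
    simp [e, he]
  · rw [ho.neg_one_pow]
    rw [if_neg (by nlinarith)]
    simp [e, Nat.not_even_iff_odd.2 ho]

lemma floor_div_pow {k : ℝ} (hk : 0 ≤ k) {n N : ℕ} (h : n ≤ N) :
    ⌊2 ^ n * k⌋₊ = ⌊2 ^ N * k⌋₊ / 2 ^ (N - n) := by
  have hp : (2 : ℝ) ^ n * 2 ^ (N - n) = 2 ^ N := by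
    rw [← pow_add]; congr 1; omega
  have hd : 2 ^ n * k = 2 ^ N * k / (((2 : ℕ) ^ (N - n) : ℕ) : ℝ) := by
    push_cast
    rw [_root_.eq_div_iff (by positivity), ← hp]
    ring
  rw [hd, Nat.floor_div_natCast]

lemma sum_eq_T {k : ℝ} (hk : 0 ≤ k) (hd : ∀ n : ℕ, (⌊2 ^ n * k⌋₊ : ℝ) < 2 ^ n * k) (N : ℕ) :
    ∑ n ∈ Finset.Icc 1 N, Xtilde n k = T N ⌊2 ^ N * k⌋₊ := by
  have h1 : ∀ n ∈ Finset.Icc 1 N, Xtilde n k = e (⌊2 ^ N * k⌋₊ / 2 ^ (N - n)) := by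
    intro n hn
    rw [Xtilde_eq (hd n), floor_div_pow hk (Finset.mem_Icc.1 hn).2]
  rw [Finset.sum_congr rfl h1, T]
  refine Finset.sum_nbij' (fun n => N - n) (fun i => N - i) ?_ ?_ ?_ ?_ ?_
  · intro n hn
    have := Finset.mem_Icc.1 hn
    show N - n ∈ Finset.range N
    exact Finset.mem_range.2 (by omega)
  · intro i hi
    have := Finset.mem_range.1 hi
    show N - i ∈ Finset.Icc 1 N
    exact Finset.mem_Icc.2 (by omega)
  · intro n hn
    have := Finset.mem_Icc.1 hn
    show N - (N - n) = n
    omega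
  · intro i hi
    have := Finset.mem_range.1 hi
    show N - (N - i) = i
    omega
  · intro n _
    rfl


def Dy : Set ℝ := ⋃ (n : ℕ) (m : ℕ), {((m : ℝ) / 2 ^ n)}

lemma Dy_countable : Dy.Countable :=
  Set.countable_iUnion fun _ => Set.countable_iUnion fun _ => Set.countable_singleton _

lemma mem_Dy {k : ℝ} (n m : ℕ) (h : k = (m : ℝ) / 2 ^ n) : k ∈ Dy :=
  Set.mem_iUnion.2 ⟨n, Set.mem_iUnion.2 ⟨m, by simp [h]⟩⟩

lemma not_Dy {k : ℝ} (hk : k ∈ Set.Icc (0 : ℝ) 1) (h : k ∉ Dy) :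
    0 ≤ k ∧ k < 1 ∧ ∀ n : ℕ, (⌊2 ^ n * k⌋₊ : ℝ) < 2 ^ n * k := by
  obtain ⟨hk0, hk1⟩ := hk
  have hne1 : k ≠ 1 := fun h1 => h (mem_Dy 0 1 (by simp [h1]))
  refine ⟨hk0, lt_of_le_of_ne hk1 hne1, fun n => ?_⟩
  have hx0 : (0 : ℝ) ≤ 2 ^ n * k := by positivity
  rcases lt_or_eq_of_le (Nat.floor_le hx0) with hlt | heq
  · exact hlt
  · exfalso
    apply h
    apply mem_Dy n ⌊2 ^ n * k⌋₊
    rw [_root_.eq_div_iff (by positivity : ((2 : ℝ) ^ n) ≠ 0)]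
    linarith [heq]

lemma part1 (ε : ℝ) (hε : 0 < ε) (α : ℝ) (hα : α ∈ Set.Ioo (0 : ℝ) 1)
    (hcond : (2 : ℝ) ^ (1 - α) * Real.exp (-ε ^ 2 / 2) < 1) :
    μH[α] {k ∈ Set.Icc (0 : ℝ) 1 |
      ε < limsup (fun N : ℕ =>
        |(1 / (N : ℝ)) * ∑ n ∈ Finset.Icc 1 N, Xtilde n k|) atTop} = 0 := by
  obtain ⟨hα0, hα1⟩ := hα
  set S := {k ∈ Set.Icc (0 : ℝ) 1 |
      ε < limsup (fun N : ℕ =>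
        |(1 / (N : ℝ)) * ∑ n ∈ Finset.Icc 1 N, Xtilde n k|) atTop} with hS
  set r : ℝ := (2 : ℝ) ^ (1 - α) * Real.exp (-ε ^ 2 / 2) with hrdef
  have hr0 : 0 < r := by positivity
  have hr1 : r < 1 := hcond
  -- real counting estimate
  have hcard : ∀ N : ℕ, ((Bad ε N).card : ℝ) * ((2 : ℝ) ^ N)⁻¹ ^ α ≤ 2 * r ^ N := by
    intro N
    have h1 : ((2 : ℝ) ^ N)⁻¹ ^ α = ((2 : ℝ) ^ (-α : ℝ)) ^ N := by
      rw [← Real.rpow_natCast (2 : ℝ) N, ← Real.rpow_neg (by norm_num : (0:ℝ) ≤ 2),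
        ← Real.rpow_mul (by norm_num : (0:ℝ) ≤ 2)]
      rw [show -(N : ℝ) * α = -α * (N : ℝ) by ring]
      rw [Real.rpow_mul (by norm_num : (0:ℝ) ≤ 2), Real.rpow_natCast]
    have h2 : (2 : ℝ) * (2 : ℝ) ^ (-α : ℝ) = (2 : ℝ) ^ (1 - α) := by
      rw [show (1 : ℝ) - α = 1 + (-α) by ring, Real.rpow_add (by norm_num : (0:ℝ) < 2),
        Real.rpow_one]
    calc ((Bad ε N).card : ℝ) * ((2 : ℝ) ^ N)⁻¹ ^ α
        ≤ (2 * 2 ^ N * Real.exp (-(ε ^ 2) / 2) ^ N) * ((2 : ℝ) ^ N)⁻¹ ^ α :=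
          mul_le_mul_of_nonneg_right (card_Bad_le ε hε N) (by positivity)
      _ = 2 * r ^ N := by
          rw [h1, hrdef, ← h2, mul_pow, mul_pow]
          ring
  -- diameters of dyadic intervals
  have hdiamIcc : ∀ N j : ℕ,
      Metric.ediam (Set.Icc ((j : ℝ) / 2 ^ N) (((j : ℝ) + 1) / 2 ^ N))
        = ENNReal.ofReal (((2 : ℝ) ^ N)⁻¹) := by
    intro N j
    rw [Real.ediam_Icc]
    congr 1
    field_simp
    ring
  -- the covering sets
  set t : ℕ → ℕ × ℕ → Set ℝ := fun M p =>
    if p.2 ∈ Bad ε (M + p.1) then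
      Set.Icc ((p.2 : ℝ) / 2 ^ (M + p.1)) (((p.2 : ℝ) + 1) / 2 ^ (M + p.1))
    else ∅ with ht_def
  have ht : ∀ M : ℕ, ∀ p : ℕ × ℕ,
      Metric.ediam (t M p) ≤ ENNReal.ofReal (((2 : ℝ) ^ M)⁻¹) := by
    intro M p
    simp only [ht_def]
    split_ifs with hp
    · rw [hdiamIcc]
      apply ENNReal.ofReal_le_ofReal
      have h2M : (2 : ℝ) ^ M ≤ 2 ^ (M + p.1) := by
        apply pow_le_pow_right₀ (by norm_num)
        omega
      exact inv_anti₀ (by positivity) h2M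
    · simp
  have hst : ∀ M : ℕ, S \ Dy ⊆ ⋃ p : ℕ × ℕ, t M p := by
    intro M k hk
    obtain ⟨hkS, hkD⟩ := hk
    obtain ⟨hIcc, hlim⟩ := hkS
    obtain ⟨hk0, hk1, hfl⟩ := not_Dy hIcc hkD
    have hfreq := frequently_lt_of_lt_limsup
      (isCoboundedUnder_le_of_le atTop (fun N => abs_nonneg _)) hlim
    obtain ⟨N, hNM, hNε⟩ := frequently_atTop.1 hfreq (max M 1)
    have hMN : M ≤ N := le_trans (le_max_left _ _) hNM
    have hN1 : 1 ≤ N := le_trans (le_max_right _ _) hNM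
    have hNpos : (0 : ℝ) < N := by exact_mod_cast hN1
    have habs : |(1 / (N : ℝ)) * ∑ n ∈ Finset.Icc 1 N, Xtilde n k|
        = |∑ n ∈ Finset.Icc 1 N, Xtilde n k| / N := by
      rw [abs_mul, abs_of_nonneg (by positivity : (0:ℝ) ≤ 1 / (N : ℝ))]
      ring
    have hTb : ε * N < |∑ n ∈ Finset.Icc 1 N, Xtilde n k| := by
      rw [habs] at hNε
      exact (lt_div_iff₀ hNpos).1 hNε
    set j := ⌊2 ^ N * k⌋₊ with hj
    have hsum : ∑ n ∈ Finset.Icc 1 N, Xtilde n k = T N j := sum_eq_T hk0 hfl N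
    have hx0 : (0 : ℝ) ≤ 2 ^ N * k := by positivity
    have hjlt : j < 2 ^ N := by
      rw [hj]
      rw [Nat.floor_lt hx0]
      push_cast
      calc 2 ^ N * k < 2 ^ N * 1 := by
            apply mul_lt_mul_of_pos_left hk1 (by positivity)
        _ = 2 ^ N := mul_one _
    have hjBad : j ∈ Bad ε N := by
      refine Finset.mem_filter.2 ⟨Finset.mem_range.2 hjlt, ?_⟩
      rw [← hsum]
      exact hTb
    refine Set.mem_iUnion.2 ⟨(N - M, j), ?_⟩
    have hMNM : M + (N - M) = N := by omega
    simp only [ht_def]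
    rw [hMNM, if_pos hjBad]
    constructor
    · rw [div_le_iff₀ (by positivity : (0:ℝ) < 2 ^ N)]
      have := Nat.floor_le hx0
      rw [← hj] at this
      linarith
    · rw [le_div_iff₀ (by positivity : (0:ℝ) < 2 ^ N)]
      have := Nat.lt_floor_add_one (2 ^ N * k)
      rw [← hj] at this
      linarith
  -- apply the covering bound
  have hrtend : Tendsto (fun M : ℕ => ENNReal.ofReal (((2 : ℝ) ^ M)⁻¹)) atTop (𝓝 0) := by
    have h1 : Tendsto (fun M : ℕ => ((2 : ℝ)⁻¹) ^ M) atTop (𝓝 0) :=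
      tendsto_pow_atTop_nhds_zero_of_lt_one (by norm_num) (by norm_num)
    have h2 : Tendsto (fun M : ℕ => ((2 : ℝ) ^ M)⁻¹) atTop (𝓝 0) := by
      simpa [inv_pow] using h1
    simpa using ENNReal.tendsto_ofReal h2
  have hμ1 : μH[α] (S \ Dy) ≤
      liminf (fun M => ∑' p : ℕ × ℕ, Metric.ediam (t M p) ^ α) atTop :=
    Measure.hausdorffMeasure_le_liminf_tsum α (S \ Dy)
      (fun M => ENNReal.ofReal (((2 : ℝ) ^ M)⁻¹)) hrtend t
      (Eventually.of_forall ht) (Eventually.of_forall hst)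
  -- per-stage bound
  have hsummable : ∀ M : ℕ, Summable (fun p : ℕ => 2 * r ^ (M + p)) := by
    intro M
    have : (fun p : ℕ => 2 * r ^ (M + p)) = fun p : ℕ => (2 * r ^ M) * r ^ p := by
      funext p
      rw [pow_add]
      ring
    rw [this]
    exact (summable_geometric_of_lt_one hr0.le hr1).mul_left _
  have hstage : ∀ M : ℕ, (∑' p : ℕ × ℕ, Metric.ediam (t M p) ^ α)
      ≤ ENNReal.ofReal ((2 * r ^ M) * (1 - r)⁻¹) := by
    intro M
    rw [ENNReal.tsum_prod']
    have hinner : ∀ p : ℕ, (∑' j : ℕ, Metric.ediam (t M (p, j)) ^ α)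
        ≤ ENNReal.ofReal (2 * r ^ (M + p)) := by
      intro p
      have hval : ∀ j : ℕ, Metric.ediam (t M (p, j)) ^ α
          = if j ∈ Bad ε (M + p) then ENNReal.ofReal (((2 : ℝ) ^ (M + p))⁻¹ ^ α) else 0 := by
        intro j
        simp only [ht_def]
        split_ifs with hjb
        · rw [hdiamIcc, ← ENNReal.ofReal_rpow_of_pos (by positivity)]
        · simp [ENNReal.zero_rpow_of_pos hα0]
      calc (∑' j : ℕ, Metric.ediam (t M (p, j)) ^ α)
          = ∑ j ∈ Bad ε (M + p), ENNReal.ofReal (((2 : ℝ) ^ (M + p))⁻¹ ^ α) := by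
            rw [show (fun j : ℕ => Metric.ediam (t M (p, j)) ^ α)
              = fun j : ℕ => if j ∈ Bad ε (M + p) then
                  ENNReal.ofReal (((2 : ℝ) ^ (M + p))⁻¹ ^ α) else 0 from funext hval]
            rw [tsum_eq_sum (s := Bad ε (M + p)) (fun j hj => if_neg hj)]
            exact Finset.sum_congr rfl fun j hj => if_pos hj
        _ = ((Bad ε (M + p)).card : ℝ≥0∞) * ENNReal.ofReal (((2 : ℝ) ^ (M + p))⁻¹ ^ α) := by
            rw [Finset.sum_const, nsmul_eq_mul]
        _ = ENNReal.ofReal (((Bad ε (M + p)).card : ℝ) * (((2 : ℝ) ^ (M + p))⁻¹ ^ α)) := by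
            rw [ENNReal.ofReal_mul (Nat.cast_nonneg _), ENNReal.ofReal_natCast]
        _ ≤ ENNReal.ofReal (2 * r ^ (M + p)) :=
            ENNReal.ofReal_le_ofReal (hcard (M + p))
    calc (∑' p : ℕ, ∑' j : ℕ, Metric.ediam (t M (p, j)) ^ α)
        ≤ ∑' p : ℕ, ENNReal.ofReal (2 * r ^ (M + p)) := ENNReal.tsum_le_tsum hinner
      _ = ENNReal.ofReal (∑' p : ℕ, 2 * r ^ (M + p)) :=
          (ENNReal.ofReal_tsum_of_nonneg (fun p => by positivity) (hsummable M)).symm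
      _ = ENNReal.ofReal ((2 * r ^ M) * (1 - r)⁻¹) := by
          congr 1
          have h1 : (fun p : ℕ => 2 * r ^ (M + p)) = fun p : ℕ => (2 * r ^ M) * r ^ p := by
            funext p
            rw [pow_add]
            ring
          rw [h1, tsum_mul_left, tsum_geometric_of_lt_one hr0.le hr1]
  have hconv : Tendsto (fun M : ℕ => ENNReal.ofReal ((2 * r ^ M) * (1 - r)⁻¹)) atTop (𝓝 0) := by
    have h1 : Tendsto (fun M : ℕ => (2 * r ^ M) * (1 - r)⁻¹) atTop (𝓝 0) := by
      have h2 := tendsto_pow_atTop_nhds_zero_of_lt_one hr0.le hr1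
      have h3 := (h2.const_mul (2 : ℝ)).mul_const ((1 - r)⁻¹)
      simpa using h3
    simpa using ENNReal.tendsto_ofReal h1
  have hmain : μH[α] (S \ Dy) = 0 := by
    have hle : μH[α] (S \ Dy) ≤
        liminf (fun M : ℕ => ENNReal.ofReal ((2 * r ^ M) * (1 - r)⁻¹)) atTop :=
      hμ1.trans (liminf_le_liminf (Eventually.of_forall hstage))
    rw [hconv.liminf_eq] at hle
    exact le_zero_iff.1 hle
  have hDy0 : μH[α] (S ∩ Dy) = 0 := by
    have hdim : dimH (S ∩ Dy) = 0 := dimH_countable (Dy_countable.mono Set.inter_subset_right)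
    have hlt : dimH (S ∩ Dy) < (α.toNNReal : ℝ≥0∞) := by
      rw [hdim]
      exact_mod_cast ENNReal.coe_pos.2 (Real.toNNReal_pos.2 hα0)
    have := hausdorffMeasure_of_dimH_lt hlt
    rwa [Real.coe_toNNReal α hα0.le] at this
  have hsplit : S = (S ∩ Dy) ∪ (S \ Dy) := (Set.inter_union_diff S Dy).symm
  refine le_antisymm ?_ zero_le
  calc μH[α] S ≤ μH[α] (S ∩ Dy) + μH[α] (S \ Dy) := by
        conv_lhs => rw [hsplit]
        exact measure_union_le (μ := μH[α]) _ _
    _ = 0 := by rw [hmain, hDy0, add_zero]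

lemma part2 (ε : ℝ) (hε : 0 < ε) :
    dimH {k ∈ Set.Icc (0 : ℝ) 1 |
        ε < limsup (fun N : ℕ =>
          |(1 / (N : ℝ)) * ∑ n ∈ Finset.Icc 1 N, Xtilde n k|) atTop}
      ≤ ENNReal.ofReal (1 - ε ^ 2 / (2 * Real.log 2)) := by
  set S := {k ∈ Set.Icc (0 : ℝ) 1 |
      ε < limsup (fun N : ℕ =>
        |(1 / (N : ℝ)) * ∑ n ∈ Finset.Icc 1 N, Xtilde n k|) atTop} with hSdef
  set d : ℝ := 1 - ε ^ 2 / (2 * Real.log 2) with hd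
  have hlog2 : 0 < Real.log 2 := Real.log_pos (by norm_num)
  by_contra hcon
  push_neg at hcon
  have hStop : dimH S ≤ 1 := by
    calc dimH S ≤ dimH (Set.univ : Set ℝ) := dimH_mono (Set.subset_univ _)
      _ = 1 := Real.dimH_univ
  have hne : dimH S ≠ ⊤ := ne_top_of_le_ne_top ENNReal.one_ne_top hStop
  set s : ℝ := (dimH S).toReal with hsdef
  have hs1 : s ≤ 1 := by
    have := ENNReal.toReal_mono ENNReal.one_ne_top hStop
    simpa using this
  have hds : max d 0 < s := by
    have h1 : (ENNReal.ofReal d).toReal < (dimH S).toReal :=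
      ENNReal.toReal_strict_mono hne hcon
    rwa [ENNReal.toReal_ofReal'] at h1
  clear_value s
  clear_value d
  set α : ℝ := (max d 0 + s) / 2 with hαdef
  clear_value α
  have hmax0 : (0:ℝ) ≤ max d 0 := le_max_right _ _
  have hα0 : 0 < α := by
    rw [hαdef]; linarith
  have hαs : α < s := by rw [hαdef]; linarith
  have hα1 : α < 1 := lt_of_lt_of_le hαs hs1
  have hαd : d < α := by
    have : d ≤ max d 0 := le_max_left _ _
    rw [hαdef]; linarith
  have hcond : (2 : ℝ) ^ (1 - α) * Real.exp (-ε ^ 2 / 2) < 1 := by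
    have h2 : (2 : ℝ) ^ (1 - α) * Real.exp (-ε ^ 2 / 2)
        = Real.exp (Real.log 2 * (1 - α) + -ε ^ 2 / 2) := by
      rw [Real.rpow_def_of_pos (by norm_num : (0:ℝ) < 2), ← Real.exp_add]
    rw [h2]
    have hexp0 : Real.log 2 * (1 - α) + -ε ^ 2 / 2 < 0 := by
      have h3 : 1 - α < ε ^ 2 / (2 * Real.log 2) := by rw [hd] at hαd; linarith
      have h4 := mul_lt_mul_of_pos_left h3 hlog2
      have h5 : Real.log 2 * (ε ^ 2 / (2 * Real.log 2)) = ε ^ 2 / 2 := by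
        field_simp
      linarith
    calc Real.exp (Real.log 2 * (1 - α) + -ε ^ 2 / 2) < Real.exp 0 :=
        Real.exp_lt_exp.2 hexp0
      _ = 1 := Real.exp_zero
  have hμ := part1 ε hε α ⟨hα0, hα1⟩ hcond
  have hdim : dimH S ≤ ENNReal.ofReal α := by
    have h0 : μH[((α.toNNReal : ℝ))] S = 0 := by rwa [Real.coe_toNNReal α hα0.le]
    have h := dimH_le_of_hausdorffMeasure_ne_top (s := S) (d := α.toNNReal)
      (by rw [h0]; exact ENNReal.zero_ne_top)
    rwa [show ((α.toNNReal : ℝ≥0∞)) = ENNReal.ofReal α from rfl] at h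
  have hlt : ENNReal.ofReal α < dimH S := by
    rw [← ENNReal.ofReal_toReal hne, ← hsdef]
    exact (ENNReal.ofReal_lt_ofReal_iff (lt_of_le_of_lt hmax0 hds)).2 hαs
  exact absurd hdim (not_le.2 hlt)

end Stmt8

/-- For `ε > 0`, the set
`{k ∈ [0,1] : limsup_N |(1/N)Σ_{n=1}^{N} X̃_n(k)| > ε}` has `α`-dimensional Hausdorff
measure zero for every `α ∈ (0,1)` with `2^{1−α}·e^{−ε²/2} < 1`; in particular its
Hausdorff dimension is at most `max {0, 1 − ε²/(2 ln 2)}` (the truncation at `0` being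
built into `ENNReal.ofReal`). -/
theorem stmt_8 (ε : ℝ) (hε : 0 < ε) :
    (∀ α : ℝ, α ∈ Set.Ioo (0 : ℝ) 1 →
        (2 : ℝ) ^ (1 - α) * Real.exp (-ε ^ 2 / 2) < 1 →
        μH[α] {k ∈ Set.Icc (0 : ℝ) 1 |
          ε < limsup (fun N : ℕ =>
            |(1 / (N : ℝ)) * ∑ n ∈ Finset.Icc 1 N, Xtilde n k|) atTop} = 0) ∧
      dimH {k ∈ Set.Icc (0 : ℝ) 1 |
          ε < limsup (fun N : ℕ =>
            |(1 / (N : ℝ)) * ∑ n ∈ Finset.Icc 1 N, Xtilde n k|) atTop}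
        ≤ ENNReal.ofReal (1 - ε ^ 2 / (2 * Real.log 2)) := by
  exact ⟨fun α hα hcond => Stmt8.part1 ε hε α hα hcond, Stmt8.part2 ε hε⟩
end

section
/- Let I ⊂ ℝ be a bounded interval, γ > 1, M < ∞ and c < ∞. Let X_n : I → ℝ (n ∈ ℕ) be measurable functions with |X_n(k)| ≤ M for all n and all k ∈ I, and such that |∫_I X_m(k)X_n(k) dk| ≤ c·γ^{m−n} for all integers 1 ≤ m < n. Then for Lebesgue-almost every k ∈ I, lim_{N→∞} (1/N)Σ_{n=1}^{N} X_n(k) = 0. -/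
open Filter MeasureTheory

lemma aux_intOn {f : ℝ → ℝ} {I : Set ℝ} (hI : MeasurableSet I) (hfin : volume I ≠ ⊤)
    (hf : Measurable f) {C : ℝ} (h : ∀ k ∈ I, |f k| ≤ C) :
    IntegrableOn f I := by
  refine ⟨hf.aestronglyMeasurable, HasFiniteIntegral.restrict_of_bounded (C := C) hfin.lt_top ?_⟩
  filter_upwards [ae_restrict_mem hI] with k hk
  simpa using h k hk

lemma aux_var (I : Set ℝ) (hImeas : MeasurableSet I) (hfin : volume I ≠ ⊤)
    (γ M c : ℝ) (hγ : 1 < γ) (hM : 0 ≤ M) (hc : 0 ≤ c)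
    (X : ℕ → ℝ → ℝ) (hmeas : ∀ n : ℕ, Measurable (X n))
    (hbd : ∀ n : ℕ, ∀ k ∈ I, |X n k| ≤ M)
    (hcov : ∀ m n : ℕ, 1 ≤ m → m < n →
      |∫ k in I, X m k * X n k| ≤ c * γ ^ ((m : ℤ) - (n : ℤ)))
    (N : ℕ) :
    ∫ k in I, (∑ n ∈ Finset.Icc 1 N, X n k)^2 ≤
      ((M^2 * (volume I).toReal + c) * (2 * (1 - γ⁻¹)⁻¹)) * N := by
  have hγ0 : 0 < γ := by linarith
  have hr0 : (0:ℝ) ≤ γ⁻¹ := by positivity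
  have hr1 : γ⁻¹ < 1 := by
    rw [inv_lt_one_iff₀]; right; exact hγ
  haveI : IsFiniteMeasure (volume.restrict I) :=
    ⟨by rwa [Measure.restrict_apply_univ, lt_top_iff_ne_top]⟩
  set C : ℝ := M^2 * (volume I).toReal + c with hCdef
  have hC : 0 ≤ C := by
    have : (0:ℝ) ≤ (volume I).toReal := ENNReal.toReal_nonneg
    positivity
  have hpair : ∀ m n : ℕ, IntegrableOn (fun k => X m k * X n k) I := by
    intro m n
    refine aux_intOn hImeas hfin ((hmeas m).mul (hmeas n)) (C := M*M) fun k hk => ?_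
    rw [abs_mul]
    exact mul_le_mul (hbd m k hk) (hbd n k hk) (abs_nonneg _) hM
  have base : ∀ m n : ℕ, 1 ≤ m → m ≤ n →
      |∫ k in I, X m k * X n k| ≤ C * γ⁻¹ ^ (Nat.dist m n) := by
    intro m n hm hmn
    rcases eq_or_lt_of_le hmn with rfl | hlt
    · rw [Nat.dist_self, pow_zero, mul_one]
      calc |∫ k in I, X m k * X m k|
          ≤ (M*M) * ((volume.restrict I) Set.univ).toReal := by
            rw [← Real.norm_eq_abs]
            refine norm_integral_le_of_norm_le_const ?_
            filter_upwards [ae_restrict_mem hImeas] with k hk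
            rw [Real.norm_eq_abs, abs_mul]
            exact mul_le_mul (hbd m k hk) (hbd m k hk) (abs_nonneg _) hM
        _ = M^2 * (volume I).toReal := by rw [Measure.restrict_apply_univ]; ring
        _ ≤ C := le_add_of_nonneg_right hc
    · have h1 := hcov m n hm hlt
      have hz : γ ^ ((m:ℤ) - n) = γ⁻¹ ^ (Nat.dist m n) := by
        rw [Nat.dist_eq_sub_of_le hmn,
          show ((m:ℤ) - n) = -((n - m : ℕ) : ℤ) by omega,
          zpow_neg, zpow_natCast, inv_pow]
      calc |∫ k in I, X m k * X n k| ≤ c * γ ^ ((m:ℤ) - n) := h1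
        _ = c * γ⁻¹ ^ (Nat.dist m n) := by rw [hz]
        _ ≤ C * γ⁻¹ ^ (Nat.dist m n) := by
            refine mul_le_mul_of_nonneg_right ?_ (by positivity)
            have : (0:ℝ) ≤ M^2 * (volume I).toReal := by positivity
            linarith
  have key : ∀ m n : ℕ, 1 ≤ m → 1 ≤ n →
      |∫ k in I, X m k * X n k| ≤ C * γ⁻¹ ^ (Nat.dist m n) := by
    intro m n hm hn
    rcases le_total m n with h | h
    · exact base m n hm h
    · have he : (∫ k in I, X m k * X n k) = ∫ k in I, X n k * X m k := by
        simp_rw [mul_comm]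
      rw [he, Nat.dist_comm]
      exact base n m hn h
  have inner : ∀ m ∈ Finset.Icc 1 N,
      (∑ n ∈ Finset.Icc 1 N, γ⁻¹ ^ (Nat.dist m n)) ≤ 2 * (1 - γ⁻¹)⁻¹ := by
    intro m _
    rw [Finset.sum_comp (fun d => γ⁻¹ ^ d) (fun n => Nat.dist m n)]
    have hcard : ∀ d : ℕ,
        ((Finset.Icc 1 N).filter (fun n => Nat.dist m n = d)).card ≤ 2 := by
      intro d
      have hsub : (Finset.Icc 1 N).filter (fun n => Nat.dist m n = d) ⊆ {m + d, m - d} := by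
        intro n hn
        have hd := (Finset.mem_filter.mp hn).2
        simp only [Nat.dist] at hd
        simp only [Finset.mem_insert, Finset.mem_singleton]
        omega
      calc _ ≤ ({m + d, m - d} : Finset ℕ).card := Finset.card_le_card hsub
        _ ≤ 2 := by
            refine (Finset.card_insert_le _ _).trans ?_
            simp
    calc (∑ d ∈ (Finset.Icc 1 N).image (fun n => Nat.dist m n),
            ((Finset.Icc 1 N).filter (fun n => Nat.dist m n = d)).card • γ⁻¹ ^ d)
        ≤ ∑ d ∈ (Finset.Icc 1 N).image (fun n => Nat.dist m n), 2 * γ⁻¹ ^ d := by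
          refine Finset.sum_le_sum fun d _ => ?_
          rw [nsmul_eq_mul]
          exact mul_le_mul_of_nonneg_right (by exact_mod_cast hcard d) (by positivity)
      _ = 2 * ∑ d ∈ (Finset.Icc 1 N).image (fun n => Nat.dist m n), γ⁻¹ ^ d := by
          rw [Finset.mul_sum]
      _ ≤ 2 * (1 - γ⁻¹)⁻¹ := by
          refine mul_le_mul_of_nonneg_left ?_ (by norm_num)
          have hsum := Summable.sum_le_tsum ((Finset.Icc 1 N).image (fun n => Nat.dist m n))
            (fun i _ => by positivity) (summable_geometric_of_lt_one hr0 hr1)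
          rwa [tsum_geometric_of_lt_one hr0 hr1] at hsum
  have hexp : (∫ k in I, (∑ n ∈ Finset.Icc 1 N, X n k)^2) =
      ∑ m ∈ Finset.Icc 1 N, ∑ n ∈ Finset.Icc 1 N, ∫ k in I, X m k * X n k := by
    simp_rw [sq, Finset.sum_mul_sum]
    rw [integral_finset_sum _ (fun m _ => integrable_finset_sum _ (fun n _ => hpair m n))]
    exact Finset.sum_congr rfl fun m _ => integral_finset_sum _ fun n _ => hpair m n
  rw [hexp]
  calc (∑ m ∈ Finset.Icc 1 N, ∑ n ∈ Finset.Icc 1 N, ∫ k in I, X m k * X n k)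
      ≤ ∑ m ∈ Finset.Icc 1 N, ∑ n ∈ Finset.Icc 1 N, C * γ⁻¹ ^ (Nat.dist m n) := by
        refine Finset.sum_le_sum fun m hm => Finset.sum_le_sum fun n hn => ?_
        exact (le_abs_self _).trans
          (key m n (Finset.mem_Icc.mp hm).1 (Finset.mem_Icc.mp hn).1)
    _ = ∑ m ∈ Finset.Icc 1 N, C * ∑ n ∈ Finset.Icc 1 N, γ⁻¹ ^ (Nat.dist m n) := by
        simp_rw [Finset.mul_sum]
    _ ≤ ∑ m ∈ Finset.Icc 1 N, C * (2 * (1 - γ⁻¹)⁻¹) := by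
        exact Finset.sum_le_sum fun m hm => mul_le_mul_of_nonneg_left (inner m hm) hC
    _ = (C * (2 * (1 - γ⁻¹)⁻¹)) * N := by
        rw [Finset.sum_const, Nat.card_Icc, nsmul_eq_mul]
        push_cast [Nat.add_sub_cancel]
        ring

lemma aux_ae (μ : Measure ℝ) (g : ℕ → ℝ → ℝ)
    (hint : ∀ n, Integrable (fun x => (g n x)^2) μ)
    (B : ℕ → ℝ) (hB0 : ∀ n, 0 ≤ B n) (hB : Summable B)
    (hle : ∀ n, ∫ x, (g n x)^2 ∂μ ≤ B n) :
    ∀ᵐ x ∂μ, Tendsto (fun n => g n x) atTop (nhds 0) := by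
  set f : ℕ → ℝ → ENNReal := fun n x => ENNReal.ofReal ((g n x)^2) with hfdef
  have hf : ∀ n, AEMeasurable (f n) μ := fun n =>
    ((hint n).aemeasurable).ennreal_ofReal
  have hlint : ∀ n, (∫⁻ x, f n x ∂μ) = ENNReal.ofReal (∫ x, (g n x)^2 ∂μ) := fun n =>
    (ofReal_integral_eq_lintegral_ofReal (hint n) (ae_of_all _ fun x => sq_nonneg _)).symm
  have htop : (∫⁻ x, ∑' n, f n x ∂μ) ≠ ⊤ := by
    rw [lintegral_tsum hf]
    have h1 : (∑' n, ∫⁻ x, f n x ∂μ) ≤ ∑' n, ENNReal.ofReal (B n) := by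
      refine ENNReal.tsum_le_tsum fun n => ?_
      rw [hlint n]
      exact ENNReal.ofReal_le_ofReal (hle n)
    refine (h1.trans_lt ?_).ne
    rw [← ENNReal.ofReal_tsum_of_nonneg hB0 hB]
    exact ENNReal.ofReal_lt_top
  have hfin : ∀ᵐ x ∂μ, (∑' n, f n x) < ⊤ :=
    ae_lt_top' (AEMeasurable.ennreal_tsum hf) htop
  filter_upwards [hfin] with x hx
  have hsumm : Summable (fun n => ((f n x).toReal)) := ENNReal.summable_toReal hx.ne
  have hsq : Summable (fun n => (g n x)^2) := by
    refine hsumm.congr fun n => ?_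
    rw [hfdef]
    exact ENNReal.toReal_ofReal (sq_nonneg _)
  have h0 : Tendsto (fun n => (g n x)^2) atTop (nhds 0) := hsq.tendsto_atTop_zero
  have habs : Tendsto (fun n => |g n x|) atTop (nhds 0) := by
    have := h0.sqrt
    simpa [Real.sqrt_sq_eq_abs] using this
  exact squeeze_zero_norm (fun n => le_of_eq (Real.norm_eq_abs _)) habs

lemma aux_gap (S : ℕ → ℝ) (M : ℝ) (hM : 0 ≤ M)
    (hstep : ∀ N : ℕ, |S (N+1) - S N| ≤ M)
    (h2 : Tendsto (fun n : ℕ => S (n^2) / ((n:ℝ)^2)) atTop (nhds 0)) :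
    Tendsto (fun N : ℕ => S N / N) atTop (nhds 0) := by
  have hdiff : ∀ a b : ℕ, a ≤ b → |S b - S a| ≤ ((b - a : ℕ) : ℝ) * M := by
    intro a b hab
    induction b, hab using Nat.le_induction with
    | base => simp
    | succ b hab ih =>
      have h1 : |S (b+1) - S a| ≤ |S (b+1) - S b| + |S b - S a| := by
        have h := abs_add_le (S (b+1) - S b) (S b - S a)
        have he : (S (b+1) - S b) + (S b - S a) = S (b+1) - S a := by ring
        rwa [he] at h
      have h2' : ((b + 1 - a : ℕ) : ℝ) = ((b - a : ℕ) : ℝ) + 1 := by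
        push_cast [Nat.sub_add_comm hab]
        ring
      calc |S (b+1) - S a| ≤ |S (b+1) - S b| + |S b - S a| := h1
        _ ≤ M + ((b - a : ℕ) : ℝ) * M := add_le_add (hstep b) ih
        _ = ((b + 1 - a : ℕ) : ℝ) * M := by rw [h2']; ring
  have hsqrt : Tendsto (fun K : ℕ => Nat.sqrt K) atTop atTop := by
    refine tendsto_atTop_atTop.2 fun m => ⟨m * m, fun K hK => ?_⟩
    exact Nat.le_sqrt.mpr hK
  have term2 : Tendsto (fun n : ℕ => (2*(n:ℝ)+1)*M/((n:ℝ)^2)) atTop (nhds 0) := by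
    have hlim : Tendsto (fun n : ℕ => 2*M*(1/(n:ℝ)) + M*((1/(n:ℝ))*(1/(n:ℝ))))
        atTop (nhds 0) := by
      have l1 : Tendsto (fun n : ℕ => 1 / (n:ℝ)) atTop (nhds 0) := tendsto_one_div_atTop_nhds_zero_nat
      have := ((l1.const_mul (2*M)).add ((l1.mul l1).const_mul M))
      simpa using this
    refine hlim.congr' ?_
    filter_upwards [eventually_ge_atTop 1] with n hn
    have hn0 : (n:ℝ) ≠ 0 := by positivity
    field_simp
  have habs : Tendsto (fun K : ℕ =>
      |S (Nat.sqrt K ^ 2) / ((Nat.sqrt K : ℝ)^2)| +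
        (2*((Nat.sqrt K : ℝ))+1)*M/(((Nat.sqrt K : ℝ))^2)) atTop (nhds 0) := by
    have t1 : Tendsto (fun n : ℕ => |S (n^2) / ((n:ℝ)^2)|) atTop (nhds 0) := by
      have := h2.abs; simpa using this
    have := (t1.comp hsqrt).add (term2.comp hsqrt)
    simpa [Function.comp] using this
  refine squeeze_zero_norm' ?_ habs
  filter_upwards [eventually_ge_atTop 1] with K hK
  set n := Nat.sqrt K with hn
  have hn1 : 1 ≤ n := by
    have := Nat.sqrt_pos.mpr (by omega : 0 < K)
    omega
  have hle1 : n^2 ≤ K := by rw [sq]; exact Nat.sqrt_le K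
  have hlt2 : K < (n+1)^2 := by rw [sq]; exact Nat.lt_succ_sqrt K
  have hgap : ((K - n^2 : ℕ) : ℝ) ≤ 2*(n:ℝ) := by
    have h' : K - n^2 ≤ 2*n := by
      have hx : K < n^2 + 2*n + 1 := by nlinarith [hlt2]
      omega
    calc ((K - n^2 : ℕ) : ℝ) ≤ ((2*n : ℕ) : ℝ) := Nat.cast_le.mpr h'
      _ = 2*(n:ℝ) := by push_cast; ring
  have hKpos : (0:ℝ) < (K:ℝ) := by exact_mod_cast (by omega : 0 < K)
  have hnpos : (0:ℝ) < ((n:ℝ))^2 := by positivity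
  have hnK : ((n:ℝ))^2 ≤ (K:ℝ) := by exact_mod_cast hle1
  have hSb : |S K| ≤ |S (n^2)| + (2*(n:ℝ)+1)*M := by
    have h1 : |S K| ≤ |S (n^2)| + |S K - S (n^2)| := by
      have : S K = S (n^2) + (S K - S (n^2)) := by ring
      calc |S K| = |S (n^2) + (S K - S (n^2))| := by rw [← this]
        _ ≤ |S (n^2)| + |S K - S (n^2)| := abs_add_le _ _
    have h2' : |S K - S (n^2)| ≤ ((K - n^2 : ℕ) : ℝ) * M := hdiff _ _ hle1
    have h3 : ((K - n^2 : ℕ) : ℝ) * M ≤ (2*(n:ℝ)+1)*M := by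
      refine mul_le_mul_of_nonneg_right ?_ hM
      linarith [hgap]
    linarith
  rw [Real.norm_eq_abs, abs_div, abs_of_pos hKpos]
  calc |S K| / (K:ℝ) ≤ (|S (n^2)| + (2*(n:ℝ)+1)*M) / (K:ℝ) := by gcongr
    _ ≤ (|S (n^2)| + (2*(n:ℝ)+1)*M) / ((n:ℝ)^2) := by
        gcongr

    _ = |S (n^2) / ((n:ℝ)^2)| + (2*(n:ℝ)+1)*M/((n:ℝ)^2) := by
        rw [abs_div, abs_of_pos hnpos, add_div]

/-- Let `I ⊂ ℝ` be a bounded interval, `γ > 1`, `M, c < ∞`. Let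
`X_n : ℝ → ℝ` be measurable with `|X_n(k)| ≤ M` on `I`, and with
`|∫_I X_m X_n dk| ≤ c·γ^{m−n}` for all `1 ≤ m < n`. Then for Lebesgue-a.e. `k ∈ I`,
`(1/N)Σ_{n=1}^{N} X_n(k) → 0`. -/
theorem stmt_9 (I : Set ℝ) (hIbdd : Bornology.IsBounded I) (hIint : I.OrdConnected)
    (γ M c : ℝ) (hγ : 1 < γ)
    (X : ℕ → ℝ → ℝ) (hmeas : ∀ n : ℕ, Measurable (X n))
    (hbd : ∀ n : ℕ, ∀ k ∈ I, |X n k| ≤ M)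
    (hcov : ∀ m n : ℕ, 1 ≤ m → m < n →
      |∫ k in I, X m k * X n k| ≤ c * γ ^ ((m : ℤ) - (n : ℤ))) :
    ∀ᵐ k ∂(volume.restrict I),
      Tendsto (fun N : ℕ => (∑ n ∈ Finset.Icc 1 N, X n k) / (N : ℝ)) atTop (nhds 0) := by
  rcases eq_or_ne (volume I) 0 with h0 | h0
  · rw [Measure.restrict_eq_zero.mpr h0]
    simp
  have hImeas : MeasurableSet I := hIint.measurableSet
  have hfin : volume I ≠ ⊤ := hIbdd.measure_lt_top.ne
  obtain ⟨k₀, hk₀⟩ : I.Nonempty := nonempty_of_measure_ne_zero h0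
  have hM : 0 ≤ M := (abs_nonneg _).trans (hbd 0 k₀ hk₀)
  have hγ0 : 0 < γ := by linarith
  have hc : 0 ≤ c := by
    have h12 := hcov 1 2 le_rfl (by norm_num)
    norm_num at h12
    have hp : (0:ℝ) < γ⁻¹ := inv_pos.mpr hγ0
    nlinarith [abs_nonneg (∫ k in I, X 1 k * X 2 k)]
  have hrpos : (0:ℝ) < 1 - γ⁻¹ := by
    have : γ⁻¹ < 1 := by rw [inv_lt_one_iff₀]; right; exact hγ
    linarith
  set A : ℝ := (M^2 * (volume I).toReal + c) * (2 * (1 - γ⁻¹)⁻¹) with hAdef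
  have hA : 0 ≤ A := by
    have h1 : (0:ℝ) ≤ (volume I).toReal := ENNReal.toReal_nonneg
    have h2 : (0:ℝ) ≤ (1 - γ⁻¹)⁻¹ := by positivity
    positivity
  have hvar := aux_var I hImeas hfin γ M c hγ hM hc X hmeas hbd hcov
  set g : ℕ → ℝ → ℝ := fun n k => (∑ j ∈ Finset.Icc 1 (n^2), X j k) / ((n:ℝ)^2) with hgdef
  have habsg : ∀ n : ℕ, ∀ k ∈ I, |g n k| ≤ ((n:ℝ)^2) * M := by
    intro n k hk
    have h1 : |∑ j ∈ Finset.Icc 1 (n^2), X j k| ≤ ((n:ℝ)^2) * M := by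
      calc |∑ j ∈ Finset.Icc 1 (n^2), X j k| ≤ ∑ j ∈ Finset.Icc 1 (n^2), |X j k| :=
            Finset.abs_sum_le_sum_abs _ _
        _ ≤ ∑ j ∈ Finset.Icc 1 (n^2), M := Finset.sum_le_sum fun j _ => hbd j k hk
        _ = ((n:ℝ)^2) * M := by
            rw [Finset.sum_const, Nat.card_Icc, nsmul_eq_mul]
            push_cast [Nat.add_sub_cancel]
            ring
    rcases Nat.eq_zero_or_pos n with rfl | hn
    · simp [hgdef]
    · have hone : (1:ℝ) ≤ (n:ℝ)^2 := by
        have : (1:ℝ) ≤ (n:ℝ) := by exact_mod_cast hn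
        nlinarith
      have hpos : (0:ℝ) < (n:ℝ)^2 := by positivity
      calc |g n k| = |∑ j ∈ Finset.Icc 1 (n^2), X j k| / ((n:ℝ)^2) := by
            rw [hgdef, abs_div, abs_of_pos hpos]
        _ ≤ |∑ j ∈ Finset.Icc 1 (n^2), X j k| := div_le_self (abs_nonneg _) hone
        _ ≤ ((n:ℝ)^2) * M := h1
  have hgint : ∀ n, Integrable (fun k => (g n k)^2) (volume.restrict I) := by
    intro n
    refine aux_intOn hImeas hfin ?_ (C := (((n:ℝ)^2)*M)^2) ?_
    · exact ((Finset.measurable_sum _ fun j _ => hmeas j).div_const _).pow_const 2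
    · intro k hk
      rw [abs_of_nonneg (sq_nonneg _), ← sq_abs]
      exact pow_le_pow_left₀ (abs_nonneg _) (habsg n k hk) 2
  have hle : ∀ n : ℕ, ∫ k in I, (g n k)^2 ≤ A / ((n:ℝ)^2) := by
    intro n
    rcases Nat.eq_zero_or_pos n with rfl | hn
    · simp [hgdef]
    · have hne : ((n:ℝ)^2) ≠ 0 := by positivity
      have hv := hvar (n^2)
      have heq : ∀ k : ℝ, (g n k)^2 = (∑ j ∈ Finset.Icc 1 (n^2), X j k)^2 / ((n:ℝ)^2)^2 := by
        intro k; rw [hgdef]; rw [div_pow]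
      calc (∫ k in I, (g n k)^2)
          = (∫ k in I, (∑ j ∈ Finset.Icc 1 (n^2), X j k)^2) / ((n:ℝ)^2)^2 := by
            simp_rw [heq]; rw [integral_div]
        _ ≤ ((M^2 * (volume I).toReal + c) * (2 * (1 - γ⁻¹)⁻¹) * ((n^2 : ℕ) : ℝ)) / ((n:ℝ)^2)^2 := by
            gcongr
        _ = A / ((n:ℝ)^2) := by
            rw [← hAdef]
            push_cast
            field_simp
  have hBsum : Summable (fun n : ℕ => A / ((n:ℝ)^2)) := by
    have h := (Real.summable_one_div_nat_pow.mpr (by norm_num : 1 < 2)).mul_left A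
    refine h.congr fun n => ?_
    rw [mul_one_div]
  have hB0 : ∀ n : ℕ, 0 ≤ A / ((n:ℝ)^2) := fun n => div_nonneg hA (sq_nonneg _)
  have hae := aux_ae (volume.restrict I) g hgint _ hB0 hBsum hle
  filter_upwards [hae, ae_restrict_mem hImeas] with k hk hkI
  refine aux_gap (fun N => ∑ j ∈ Finset.Icc 1 N, X j k) M hM ?_ ?_
  · intro N
    show |(∑ j ∈ Finset.Icc 1 (N+1), X j k) - ∑ j ∈ Finset.Icc 1 N, X j k| ≤ M
    rw [Finset.sum_Icc_succ_top (Nat.succ_le_succ (Nat.zero_le N)), add_sub_cancel_left]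
    exact hbd (N+1) k hkI
  · exact hk
end

section
/- For every real v, (1/π)·∫₀^π (1/2)·ln(1 + v·sin(2θ) + v²·sin²(θ)) dθ = (1/2)·ln(1 + v²/4). -/
open Real intervalIntegral

noncomputable def gg (r : ℝ) : ℝ := ∫ θ in (0:ℝ)..(2*π), Real.log (1 - 2*r*Real.cos θ + r^2)

lemma gpos {r : ℝ} (h : |r| < 1) (θ : ℝ) : 0 < 1 - 2*r*Real.cos θ + r^2 := by
  obtain ⟨h1, h2⟩ := abs_lt.mp h
  have hc2 : Real.cos θ ^ 2 ≤ 1 := Real.cos_sq_le_one θ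
  have h4 : r * Real.cos θ < 1 := by
    calc r * Real.cos θ ≤ |r * Real.cos θ| := le_abs_self _
    _ = |r| * |Real.cos θ| := abs_mul _ _
    _ ≤ |r| * 1 := by gcongr; exact Real.abs_cos_le_one θ
    _ < 1 := by simpa using h
  nlinarith [mul_pos (sub_pos.2 h4) (sub_pos.2 h4), mul_nonneg (sq_nonneg r) (sub_nonneg.2 hc2)]

lemma gcont (r : ℝ) (h : |r| < 1) :
    Continuous (fun θ => Real.log (1 - 2*r*Real.cos θ + r^2)) := by
  apply Continuous.log (by fun_prop)
  exact fun θ => (gpos h θ).ne'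

lemma gper (r : ℝ) : Function.Periodic (fun θ => Real.log (1 - 2*r*Real.cos θ + r^2)) (2*π) := by
  intro x; simp [Real.cos_add_two_pi]

lemma g_neg (r : ℝ) : gg (-r) = gg r := by
  unfold gg
  have h1 : (∫ θ in (0:ℝ)..(2*π), Real.log (1 - 2*(-r)*Real.cos θ + (-r)^2))
      = ∫ θ in (0:ℝ)..(2*π), (fun t => Real.log (1 - 2*r*Real.cos t + r^2)) (θ + π) := by
    apply intervalIntegral.integral_congr
    intro θ _
    show Real.log (1 - 2*(-r)*Real.cos θ + (-r)^2) = Real.log (1 - 2*r*Real.cos (θ+π) + r^2)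
    rw [Real.cos_add_pi]
    congr 1
    ring
  rw [h1, intervalIntegral.integral_comp_add_right
    (fun t => Real.log (1 - 2*r*Real.cos t + r^2)) π]
  have := (gper r).intervalIntegral_add_eq π 0
  simpa [two_mul, add_comm, add_assoc, add_left_comm] using this

lemma g_sq {r : ℝ} (h : |r| < 1) : gg (r^2) = 2 * gg r := by
  have h2 : |r^2| < 1 := by
    rw [abs_pow]; exact pow_lt_one₀ (abs_nonneg r) h (by norm_num)
  have key : ∀ θ : ℝ, Real.log (1 - 2*(r^2)*Real.cos (2*θ) + (r^2)^2)
      = Real.log (1 - 2*r*Real.cos θ + r^2) + Real.log (1 - 2*(-r)*Real.cos θ + (-r)^2) := by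
    intro θ
    rw [← Real.log_mul (gpos h θ).ne' (gpos (by simpa using h) θ).ne']
    congr 1
    have hc := Real.cos_two_mul θ
    rw [hc]; ring
  have int1 : (∫ θ in (0:ℝ)..(2*π), Real.log (1 - 2*(r^2)*Real.cos (2*θ) + (r^2)^2))
      = gg r + gg (-r) := by
    rw [intervalIntegral.integral_congr (g := fun θ => Real.log (1 - 2*r*Real.cos θ + r^2)
        + Real.log (1 - 2*(-r)*Real.cos θ + (-r)^2)) (fun θ _ => key θ)]
    rw [intervalIntegral.integral_add ((gcont r h).intervalIntegrable _ _)
      ((gcont (-r) (by simpa using h)).intervalIntegrable _ _)]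
    rfl
  have int2 : (∫ θ in (0:ℝ)..(2*π), Real.log (1 - 2*(r^2)*Real.cos (2*θ) + (r^2)^2))
      = gg (r^2) := by
    have := intervalIntegral.integral_comp_mul_left
      (fun t => Real.log (1 - 2*(r^2)*Real.cos t + (r^2)^2)) (a := 0) (b := 2*π)
      (c := (2:ℝ)) two_ne_zero
    rw [this]
    have hsplit : (∫ t in (0:ℝ)..(2*(2*π)), Real.log (1 - 2*(r^2)*Real.cos t + (r^2)^2))
        = gg (r^2) + gg (r^2) := by
      have hint := (gcont (r^2) h2).intervalIntegrable (μ := MeasureTheory.volume)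
      rw [← intervalIntegral.integral_add_adjacent_intervals (b := 2*π)
        (hint 0 (2*π)) (hint (2*π) (2*(2*π)))]
      have hper := (gper (r^2)).intervalIntegral_add_eq (2*π) 0
      unfold gg
      rw [show 2*(2*π) = 2*π + 2*π by ring]
      rw [hper]
      norm_num
    have hb : (∫ x in ((2:ℝ)*0)..(2*(2*π)),
        (fun t => Real.log (1 - 2*(r^2)*Real.cos t + (r^2)^2)) x) = gg (r^2) + gg (r^2) := by
      simpa using hsplit
    rw [hb, smul_eq_mul]
    ring
  rw [← int2, int1, g_neg]; ring

lemma abs_pow_lt {r : ℝ} (h : |r| < 1) (n : ℕ) : |r ^ (2^n)| ≤ |r| := by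
  rw [abs_pow]
  exact pow_le_of_le_one (abs_nonneg r) h.le (Nat.two_pow_pos n).ne'

lemma g_pow {r : ℝ} (h : |r| < 1) (n : ℕ) : gg r = gg (r ^ (2^n)) / 2^n := by
  induction n with
  | zero => simp
  | succ n ih =>
    have h2 : |r ^ (2^n)| < 1 := lt_of_le_of_lt (abs_pow_lt h n) h
    have := g_sq h2
    rw [← pow_mul] at this
    rw [show 2^n*2 = 2^(n+1) by ring] at this
    rw [this, ih, pow_succ]
    ring

lemma g_bound {r : ℝ} (h : |r| < 1) :
    |gg r| ≤ (max (-Real.log ((1-|r|)^2)) (Real.log 4)) * (2*π) := by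
  set M := max (-Real.log ((1-|r|)^2)) (Real.log 4) with hM
  have hb : ∀ θ ∈ Set.uIoc (0:ℝ) (2*π), ‖Real.log (1 - 2*r*Real.cos θ + r^2)‖ ≤ M := by
    intro θ _
    have hlow : (1-|r|)^2 ≤ 1 - 2*r*Real.cos θ + r^2 := by
      have h1 : r * Real.cos θ ≤ |r| := by
        calc r * Real.cos θ ≤ |r * Real.cos θ| := le_abs_self _
        _ = |r| * |Real.cos θ| := abs_mul _ _
        _ ≤ |r| * 1 := by gcongr; exact Real.abs_cos_le_one θ
        _ = |r| := mul_one _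
      have : r^2 = |r|^2 := (sq_abs r).symm
      nlinarith
    have hhigh : 1 - 2*r*Real.cos θ + r^2 ≤ 4 := by
      have h1 : -|r| ≤ r * Real.cos θ := by
        have := neg_abs_le (r * Real.cos θ)
        have h2 : |r * Real.cos θ| ≤ |r| := by
          rw [abs_mul]
          calc |r| * |Real.cos θ| ≤ |r| * 1 := by gcongr; exact Real.abs_cos_le_one θ
          _ = |r| := mul_one _
        linarith
      have : r^2 = |r|^2 := (sq_abs r).symm
      nlinarith [abs_nonneg r]
    have hposx : (0:ℝ) < (1-|r|)^2 := pow_pos (by linarith) 2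
    rw [Real.norm_eq_abs, abs_le]
    constructor
    · have : -M ≤ Real.log ((1-|r|)^2) := by
        have := le_max_left (-Real.log ((1-|r|)^2)) (Real.log 4)
        linarith
      exact le_trans this (Real.log_le_log hposx hlow)
    · calc Real.log (1 - 2*r*Real.cos θ + r^2) ≤ Real.log 4 :=
        Real.log_le_log (by nlinarith [gpos h θ]) hhigh
      _ ≤ M := le_max_right _ _
  have := intervalIntegral.norm_integral_le_of_norm_le_const hb
  simp only [Real.norm_eq_abs] at this
  calc |gg r| ≤ M * |2*π - 0| := this
  _ = M * (2*π) := by rw [sub_zero, abs_of_pos (by positivity)]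

lemma g_zero {r : ℝ} (h : |r| < 1) : gg r = 0 := by
  set C := (max (-Real.log ((1-|r|)^2)) (Real.log 4)) * (2*π) with hC
  have key : ∀ n : ℕ, |gg r| ≤ C * (1/2)^n := by
    intro n
    have h2 : |r ^ (2^n)| < 1 := lt_of_le_of_lt (abs_pow_lt h n) h
    have hb : |gg (r ^ (2^n))| ≤ (max (-Real.log ((1-|r ^ (2^n)|)^2)) (Real.log 4)) * (2*π) :=
      g_bound h2
    have hb2 : |gg (r ^ (2^n))| ≤ C := by
      refine le_trans hb ?_
      rw [hC]
      have h1r : 1 - |r| ≤ 1 - |r ^ (2^n)| := by linarith [abs_pow_lt h n]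
      have h1r0 : 0 < 1 - |r| := by linarith
      refine mul_le_mul_of_nonneg_right (max_le_max ?_ le_rfl) (by positivity)
      apply neg_le_neg
      exact Real.log_le_log (pow_pos h1r0 2) (by nlinarith [abs_nonneg (r ^ (2^n))])
    rw [g_pow h n, abs_div]
    rw [abs_of_pos (by positivity : (0:ℝ) < (2:ℝ)^n)]
    rw [div_le_iff₀ (by positivity)]
    calc |gg (r ^ (2^n))| ≤ C := hb2
    _ ≤ C * (1/2)^n * 2^n := by
      rw [mul_assoc]
      rw [show ((1:ℝ)/2)^n * 2^n = 1 by rw [← mul_pow]; norm_num]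
      rw [mul_one]
  have htend : Filter.Tendsto (fun n : ℕ => C * (1/2:ℝ)^n) Filter.atTop (nhds 0) := by
    have := tendsto_pow_atTop_nhds_zero_of_lt_one (by norm_num : (0:ℝ) ≤ 1/2) (by norm_num : (1/2:ℝ) < 1)
    simpa using this.const_mul C
  have : |gg r| ≤ 0 := ge_of_tendsto' htend key |>.trans_eq rfl
  have := abs_nonneg (gg r)
  have h0 : |gg r| = 0 := le_antisymm ‹|gg r| ≤ 0› this
  exact abs_eq_zero.mp h0

lemma k2pos {p q : ℝ} (h : p^2 + q^2 < 1) (θ : ℝ) :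
    0 < 1 + 2*p*Real.cos θ + 2*q*Real.sin θ + (p^2+q^2) := by
  nlinarith [sq_nonneg (1 + p*Real.cos θ + q*Real.sin θ),
    sq_nonneg (Real.cos θ * q - Real.sin θ * p), Real.sin_sq_add_cos_sq θ]

lemma k2cont {p q : ℝ} (h : p^2 + q^2 < 1) :
    Continuous (fun θ => Real.log (1 + 2*p*Real.cos θ + 2*q*Real.sin θ + (p^2+q^2))) := by
  apply Continuous.log (by fun_prop)
  exact fun θ => (k2pos h θ).ne'

lemma K2 {p q : ℝ} (h : p^2 + q^2 < 1) :
    (∫ θ in (0:ℝ)..(2*π), Real.log (1 + 2*p*Real.cos θ + 2*q*Real.sin θ + (p^2+q^2))) = 0 := by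
  by_cases hz : p = 0 ∧ q = 0
  · obtain ⟨hp, hq⟩ := hz
    simp [hp, hq]
  · set z : ℂ := ⟨p, q⟩ with hzdef
    have hz' : z ≠ 0 := by
      intro h0
      apply hz
      exact ⟨by simpa using congrArg Complex.re h0, by simpa using congrArg Complex.im h0⟩
    set ρ := ‖z‖ with hρdef
    set α := Complex.arg z with hαdef
    have hρpos : 0 < ρ := norm_pos_iff.mpr hz'
    have hρ2 : ρ^2 = p^2 + q^2 := by
      rw [hρdef, Complex.sq_norm, Complex.normSq_mk]
      ring
    have hρ1 : ρ < 1 := by nlinarith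
    have hcos : Real.cos α = p / ρ := by rw [hαdef, Complex.cos_arg hz']
    have hsin : Real.sin α = q / ρ := by rw [hαdef, Complex.sin_arg]
    have hkey : ∀ θ : ℝ, 1 + 2*p*Real.cos θ + 2*q*Real.sin θ + (p^2+q^2)
        = 1 - 2*(-ρ)*Real.cos (θ - α) + (-ρ)^2 := by
      intro θ
      rw [Real.cos_sub, hcos, hsin, ← hρ2]
      field_simp
      ring
    have e1 : (∫ θ in (0:ℝ)..(2*π), Real.log (1 + 2*p*Real.cos θ + 2*q*Real.sin θ + (p^2+q^2)))
        = ∫ θ in (0:ℝ)..(2*π),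
            (fun t => Real.log (1 - 2*(-ρ)*Real.cos t + (-ρ)^2)) (θ - α) := by
      apply intervalIntegral.integral_congr
      intro θ _
      show Real.log (1 + 2*p*Real.cos θ + 2*q*Real.sin θ + (p^2+q^2))
        = Real.log (1 - 2*(-ρ)*Real.cos (θ - α) + (-ρ)^2)
      rw [hkey θ]
    rw [e1, intervalIntegral.integral_comp_sub_right
      (fun t => Real.log (1 - 2*(-ρ)*Real.cos t + (-ρ)^2)) α]
    have hper := (gper (-ρ)).intervalIntegral_add_eq (0 - α) 0
    have h2 : (2*π - α) = 0 - α + 2*π := by ring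
    rw [h2, hper]
    have : (∫ x in (0:ℝ)..(0 + 2*π), Real.log (1 - 2*(-ρ)*Real.cos x + (-ρ)^2)) = gg (-ρ) := by
      rw [zero_add]; rfl
    rw [this]
    exact g_zero (by rwa [abs_neg, abs_of_pos hρpos])



/-- For every real `v`,
`(1/π) ∫₀^π (1/2)·ln(1 + v·sin 2θ + v²·sin²θ) dθ = (1/2)·ln(1 + v²/4)`. -/
theorem stmt_11 (v : ℝ) :
    (1 / Real.pi) *
        ∫ θ in (0 : ℝ)..Real.pi,
          (1 / 2) * Real.log (1 + v * Real.sin (2 * θ) + v ^ 2 * (Real.sin θ) ^ 2)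
      = (1 / 2) * Real.log (1 + v ^ 2 / 4) := by
  have hs : (0:ℝ) < v^2 + 4 := by positivity
  set p : ℝ := -v^2/(v^2+4) with hp
  set q : ℝ := 2*v/(v^2+4) with hq
  set L : ℝ := 1 + v^2/4 with hL
  have hLpos : 0 < L := by positivity
  have hpq : p^2 + q^2 < 1 := by
    rw [hp, hq, div_pow, div_pow, ← add_div, div_lt_one (by positivity)]
    nlinarith
  have hkey : ∀ θ : ℝ, 1 + v * Real.sin (2*θ) + v^2 * (Real.sin θ)^2
      = L * (1 + 2*p*Real.cos (2*θ) + 2*q*Real.sin (2*θ) + (p^2+q^2)) := by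
    intro θ
    have hc := Real.cos_two_mul θ
    have hsq := Real.sin_sq_add_cos_sq θ
    have e1 : L * (1 + 2*p*Real.cos (2*θ) + 2*q*Real.sin (2*θ) + (p^2+q^2))
        = (1 + v^2/2) + v*Real.sin (2*θ) - (v^2/2)*Real.cos (2*θ) := by
      rw [hp, hq, hL]
      field_simp
      ring
    rw [e1]
    linear_combination (v^2/2)*hc + v^2*hsq
  have hlog : ∀ θ : ℝ, Real.log (1 + v * Real.sin (2*θ) + v^2 * (Real.sin θ)^2)
      = Real.log L + Real.log (1 + 2*p*Real.cos (2*θ) + 2*q*Real.sin (2*θ) + (p^2+q^2)) := by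
    intro θ
    rw [hkey θ, Real.log_mul hLpos.ne' (k2pos hpq (2*θ)).ne']
  have hint2 : (∫ θ in (0:ℝ)..π,
      (fun t => Real.log (1 + 2*p*Real.cos t + 2*q*Real.sin t + (p^2+q^2))) (2*θ)) = 0 := by
    rw [intervalIntegral.integral_comp_mul_left
      (fun t => Real.log (1 + 2*p*Real.cos t + 2*q*Real.sin t + (p^2+q^2))) two_ne_zero]
    have : (∫ x in ((2:ℝ)*0)..(2*π),
        Real.log (1 + 2*p*Real.cos x + 2*q*Real.sin x + (p^2+q^2))) = 0 := by
      rw [show (2:ℝ)*0 = 0 by ring]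
      exact K2 hpq
    rw [this, smul_zero]
  have hint1 : (∫ θ in (0:ℝ)..π,
      Real.log (1 + v * Real.sin (2*θ) + v^2 * (Real.sin θ)^2)) = π * Real.log L := by
    have e2 : (∫ θ in (0:ℝ)..π, Real.log (1 + v * Real.sin (2*θ) + v^2 * (Real.sin θ)^2))
        = ∫ θ in (0:ℝ)..π, (Real.log L +
            (fun t => Real.log (1 + 2*p*Real.cos t + 2*q*Real.sin t + (p^2+q^2))) (2*θ)) := by
      apply intervalIntegral.integral_congr
      intro θ _
      exact hlog θ
    have hI : IntervalIntegrable (fun θ : ℝ =>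
        (fun t => Real.log (1 + 2*p*Real.cos t + 2*q*Real.sin t + (p^2+q^2))) (2*θ))
        MeasureTheory.volume 0 π := by
      apply Continuous.intervalIntegrable
      exact (k2cont hpq).comp (by fun_prop)
    rw [e2, intervalIntegral.integral_add intervalIntegrable_const hI]
    rw [hint2, add_zero, intervalIntegral.integral_const, smul_eq_mul, sub_zero]
  have hfin : (∫ θ in (0:ℝ)..π,
      (1/2) * Real.log (1 + v * Real.sin (2*θ) + v^2 * (Real.sin θ)^2))
      = (1/2) * (π * Real.log L) := by
    rw [intervalIntegral.integral_const_mul, hint1]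
  rw [hfin]
  have hπ : (π:ℝ) ≠ 0 := Real.pi_ne_zero
  field_simp
end

section
/- Let 0 < D₁ ≤ D₂, c > 0, and let f : [a,b] → ℝ be differentiable with f′(k) ∈ [c·D₁, c·D₂] for every k ∈ [a,b] and with f(b) − f(a) = 2π. Let φ : [a,b] → ℝ be the affine function with φ(a) = f(a) and φ(b) = f(b). Then for every k ∈ [a,b], |f(k) − φ(k)| ≤ 2π·(√D₂ − √D₁)/(√D₂ + √D₁). -/
set_option maxHeartbeats 1600000 in
/-- Let `0 < D₁ ≤ D₂`, `c > 0`, and let `f : [a,b] → ℝ` be differentiable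
with `f′(k) ∈ [c·D₁, c·D₂]` for every `k ∈ [a,b]` and with `f(b) − f(a) = 2π`. If
`φ : [a,b] → ℝ` is the affine function with `φ(a) = f(a)` and `φ(b) = f(b)`, then for every
`k ∈ [a,b]`, `|f(k) − φ(k)| ≤ 2π·(√D₂ − √D₁)/(√D₂ + √D₁)`. -/
theorem stmt_16 (D₁ D₂ c a b : ℝ) (hD₁ : 0 < D₁) (hD : D₁ ≤ D₂) (hc : 0 < c) (hab : a ≤ b)
    (f f' : ℝ → ℝ)
    (hf : ∀ k ∈ Set.Icc a b, HasDerivWithinAt f (f' k) (Set.Icc a b) k)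
    (hf' : ∀ k ∈ Set.Icc a b, f' k ∈ Set.Icc (c * D₁) (c * D₂))
    (hper : f b - f a = 2 * Real.pi)
    (φ : ℝ → ℝ) (hφaff : ∃ p q : ℝ, ∀ t : ℝ, φ t = p * t + q)
    (hφa : φ a = f a) (hφb : φ b = f b) :
    ∀ k ∈ Set.Icc a b,
      |f k - φ k| ≤ 2 * Real.pi * (Real.sqrt D₂ - Real.sqrt D₁) /
        (Real.sqrt D₂ + Real.sqrt D₁) := by
  intro k hk
  obtain ⟨hak, hkb⟩ := hk
  have hpi := Real.pi_pos
  have hab' : a < b := by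
    rcases lt_or_eq_of_le hab with h | h
    · exact h
    · exfalso; rw [h] at hper; simp at hper
  set u := c * D₁ with hu
  set v := c * D₂ with hv
  have huv : u ≤ v := mul_le_mul_of_nonneg_left hD hc.le
  have hu0 : 0 < u := mul_pos hc hD₁
  have hcont : ContinuousOn f (Set.Icc a b) := fun x hx => (hf x hx).continuousWithinAt
  have key : ∀ x ∈ Set.Icc a b, ∀ y ∈ Set.Icc a b, x ≤ y →
      u * (y - x) ≤ f y - f x ∧ f y - f x ≤ v * (y - x) := by
    have m1 : MonotoneOn (fun x => f x - u * x) (Set.Icc a b) := by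
      apply monotoneOn_of_hasDerivWithinAt_nonneg (convex_Icc a b)
        (f' := fun x => f' x - u)
      · exact hcont.sub (continuousOn_const.mul continuousOn_id)
      · intro x hx
        have h := (hf x (interior_subset hx)).mono (interior_subset)
        simpa only [id, mul_one, Pi.sub_def] using h.sub (((hasDerivAt_id x).const_mul u).hasDerivWithinAt)
      · intro x hx
        have h2 := hf' x (interior_subset hx)
        simp only [Set.mem_Icc] at h2
        simp only [sub_nonneg]
        linarith [h2.1]
    have m2 : MonotoneOn (fun x => v * x - f x) (Set.Icc a b) := by
      apply monotoneOn_of_hasDerivWithinAt_nonneg (convex_Icc a b)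
        (f' := fun x => v - f' x)
      · exact (continuousOn_const.mul continuousOn_id).sub hcont
      · intro x hx
        have h := (hf x (interior_subset hx)).mono (interior_subset)
        simpa only [id, mul_one, Pi.sub_def] using (((hasDerivAt_id x).const_mul v).hasDerivWithinAt).sub h
      · intro x hx
        have h2 := hf' x (interior_subset hx)
        simp only [Set.mem_Icc] at h2
        simp only [sub_nonneg]
        linarith [h2.2]
    intro x hx y hy hxy
    have h1 := m1 hx hy hxy
    have h2 := m2 hx hy hxy
    simp only at h1 h2
    constructor <;> nlinarith
  obtain ⟨p, q, hφ⟩ := hφaff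
  have hpL : p * (b - a) = 2 * Real.pi := by
    have h1 := hφ a; have h2 := hφ b
    rw [hφa] at h1; rw [hφb] at h2
    nlinarith
  have hL : 0 < b - a := by linarith
  have hp : 0 < p := by nlinarith
  have hpb := key a ⟨le_refl a, hab⟩ b ⟨hab, le_refl b⟩ hab
  have hpu : u ≤ p := by nlinarith [hpb.2]
  have hpv : p ≤ v := by nlinarith [hpb.1]
  have hka : k ∈ Set.Icc a b := ⟨hak, hkb⟩
  have h1 := key a ⟨le_refl a, hab⟩ k hka hak
  have h2 := key k hka b ⟨hab, le_refl b⟩ hkb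
  have hφk : φ k = f a + p * (k - a) := by
    rw [hφ k, ← hφa, hφ a]; ring
  have hfb : f b - f a = p * (b - a) := by rw [hpL]; exact hper
  have gub1 : f k - φ k ≤ (v - p) * (k - a) := by rw [hφk]; linarith only [h1.2]
  have gub2 : f k - φ k ≤ (p - u) * (b - k) := by rw [hφk]; linarith only [h2.1, hfb]
  have glb1 : -(f k - φ k) ≤ (p - u) * (k - a) := by rw [hφk]; linarith only [h1.1]
  have glb2 : -(f k - φ k) ≤ (v - p) * (b - k) := by rw [hφk]; linarith only [h2.2, hfb]
  have hα0 : 0 ≤ v - p := by linarith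
  have hβ0 : 0 ≤ p - u := by linarith
  -- harmonic bound
  have habs : (v - u) * |f k - φ k| ≤ (v - p) * (p - u) * (b - a) := by
    rcases abs_cases (f k - φ k) with ⟨h, _⟩ | ⟨h, _⟩ <;> rw [h]
    · linarith only [mul_le_mul_of_nonneg_left gub2 hα0, mul_le_mul_of_nonneg_left gub1 hβ0]
    · linarith only [mul_le_mul_of_nonneg_left glb1 hα0, mul_le_mul_of_nonneg_left glb2 hβ0]
  set r₁ := Real.sqrt D₁ with hr₁
  set r₂ := Real.sqrt D₂ with hr₂
  have hr₁0 : 0 < r₁ := Real.sqrt_pos.2 hD₁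
  have hr₂0 : 0 < r₂ := Real.sqrt_pos.2 (lt_of_lt_of_le hD₁ hD)
  have hr₁sq : r₁ ^ 2 = D₁ := Real.sq_sqrt hD₁.le
  have hr₂sq : r₂ ^ 2 = D₂ := Real.sq_sqrt (le_trans hD₁.le hD)
  have hr12 : r₁ ≤ r₂ := Real.sqrt_le_sqrt hD
  rw [le_div_iff₀ (by positivity : (0:ℝ) < r₂ + r₁)]
  rcases eq_or_lt_of_le hD with hDeq | hDlt
  · -- D₁ = D₂ : u = v, so f k = φ k
    have huv' : u = v := by rw [hu, hv, hDeq]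
    have hvp : p = v := le_antisymm hpv (huv' ▸ hpu)
    have hup : u = p := by rw [huv', hvp]
    have hg1 : f k - φ k ≤ 0 := by rw [← hvp] at gub1; simpa using gub1
    have hg2 : 0 ≤ f k - φ k := by rw [hup] at glb1; simpa using glb1
    have h0 : f k - φ k = 0 := le_antisymm hg1 hg2
    rw [h0, abs_zero, zero_mul]
    exact mul_nonneg (by positivity) (by linarith only [hr12])
  · have hvu0 : 0 < v - u := by have := mul_lt_mul_of_pos_left hDlt hc; rw [hu, hv]; linarith only [this]
    have step1 : (v - p) * (p - u) ≤ c * p * (r₂ - r₁) ^ 2 := by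
      rw [hu, hv, ← hr₁sq, ← hr₂sq]
      nlinarith [sq_nonneg (p - c * r₁ * r₂), mul_pos hr₁0 hr₂0]
    have A := mul_le_mul_of_nonneg_right habs (by positivity : (0:ℝ) ≤ r₂ + r₁)
    have B := mul_le_mul_of_nonneg_right step1
      (by positivity : (0:ℝ) ≤ (b - a) * (r₂ + r₁))
    have C : c * p * (r₂ - r₁) ^ 2 * ((b - a) * (r₂ + r₁))
        = (v - u) * (2 * Real.pi * (r₂ - r₁)) := by
      rw [hu, hv, ← hr₁sq, ← hr₂sq, ← hpL]; ring
    have D : (v - u) * (|f k - φ k| * (r₂ + r₁)) ≤ (v - u) * (2 * Real.pi * (r₂ - r₁)) := by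
      linarith only [A, B, C]
    exact le_of_mul_le_mul_left D hvu0
end

section
/- Let k ∈ (0,π), V : ℤ⁺ → ℝ, E = 2cos(k), and let u be a not-identically-zero solution for energy E with EFGP transform (R,θ). Set θ̄(x) = θ(x) + k and v_k(x) = −V(x)/sin(k). Then for every x ≥ 1: (i) R(x+1)²/R(x)² = 1 + v_k(x)·sin(2θ̄(x)) + v_k(x)²·sin²(θ̄(x)); and (ii) whenever sin(θ̄(x)) ≠ 0 and sin(θ(x+1)) ≠ 0, cot(θ(x+1)) = cot(θ̄(x)) + v_k(x). In particular, if V(x) = 0 then R(x+1) = R(x) and θ(x+1) = θ(x) + k modulo π. -/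
/-- Let `k ∈ (0,π)`, `E = 2cos k`, and let `u` be a not-identically-zero
solution for energy `E` with EFGP transform `(R,θ)`. With `θ̄(x) = θ(x) + k` and
`v_k(x) = −V(x)/sin k`, for every `x ≥ 1`:
(i) `R(x+1)²/R(x)² = 1 + v_k(x)·sin(2θ̄(x)) + v_k(x)²·sin²(θ̄(x))`;
(ii) whenever `sin(θ̄(x)) ≠ 0` and `sin(θ(x+1)) ≠ 0`,
`cot(θ(x+1)) = cot(θ̄(x)) + v_k(x)`.
In particular, if `V(x) = 0` then `R(x+1) = R(x)` and `θ(x+1) = θ(x) + k` modulo `π`. -/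
theorem stmt_17 (k : ℝ) (hk : k ∈ Set.Ioo 0 Real.pi) (V : ℕ → ℝ)
    (u R θ : ℕ → ℝ) (hu0 : ∃ x, u x ≠ 0)
    (hu : IsSolution V (2 * Real.cos k) u) (hRθ : IsEFGP k u R θ) :
    ∀ x : ℕ, 1 ≤ x →
      ((R (x + 1)) ^ 2 / (R x) ^ 2
          = 1 + (-(V x) / Real.sin k) * Real.sin (2 * (θ x + k))
            + (-(V x) / Real.sin k) ^ 2 * (Real.sin (θ x + k)) ^ 2) ∧
      (Real.sin (θ x + k) ≠ 0 → Real.sin (θ (x + 1)) ≠ 0 →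
        Real.cot (θ (x + 1)) = Real.cot (θ x + k) + -(V x) / Real.sin k) ∧
      (V x = 0 → R (x + 1) = R x ∧ ∃ m : ℤ, θ (x + 1) = θ x + k + m * Real.pi) := by
  intro x hx
  have hsk : 0 < Real.sin k := Real.sin_pos_of_pos_of_lt_pi hk.1 hk.2
  have hsk' : Real.sin k ≠ 0 := ne_of_gt hsk
  obtain ⟨hR, eA, eB⟩ := hRθ x hx
  obtain ⟨hR', eA', eB'⟩ := hRθ (x + 1) (by omega)
  simp only [Nat.add_sub_cancel] at eA' eB'
  have heq := hu x hx
  have pyth := Real.sin_sq_add_cos_sq k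
  set v : ℝ := -(V x) / Real.sin k with hv
  -- key identity: R x * sin(θ x + k) = sin k * u x
  have hS0 : R x * Real.sin (θ x + k) = Real.sin k * u x := by
    rw [Real.sin_add]; linear_combination -Real.cos k * eB - Real.sin k * eA
  -- sin equation at x+1
  have hS : R (x + 1) * Real.sin (θ (x + 1)) = R x * Real.sin (θ x + k) := by
    rw [hS0]; exact eB'.symm
  -- cos equation at x+1
  have hC : R (x + 1) * Real.cos (θ (x + 1))
      = R x * Real.cos (θ x + k) + v * (R x * Real.sin (θ x + k)) := by
    have h1 : R x * Real.cos (θ x + k) = Real.cos k * u x - u (x - 1) := by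
      rw [Real.cos_add]; linear_combination -Real.cos k * eA + Real.sin k * eB - u (x - 1) * pyth
    have h2 : v * (R x * Real.sin (θ x + k)) = -(V x) * u x := by
      rw [hS0, hv]; field_simp
    rw [h1, h2, ← eA']; linarith [heq]
  have pyth' := Real.sin_sq_add_cos_sq (θ (x + 1))
  have pythb := Real.sin_sq_add_cos_sq (θ x + k)
  have h2m : Real.sin (2 * (θ x + k)) =
      2 * Real.sin (θ x + k) * Real.cos (θ x + k) := Real.sin_two_mul _
  have hRsq : (R (x + 1)) ^ 2 = (R x) ^ 2 *
      (1 + v * Real.sin (2 * (θ x + k)) + v ^ 2 * (Real.sin (θ x + k)) ^ 2) := by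
    linear_combination (R (x + 1) * Real.sin (θ (x + 1)) + R x * Real.sin (θ x + k)) * hS
      + (R (x + 1) * Real.cos (θ (x + 1)) + R x * Real.cos (θ x + k)
          + v * (R x * Real.sin (θ x + k))) * hC
      - (R (x + 1)) ^ 2 * pyth' + (R x) ^ 2 * pythb - (R x) ^ 2 * v * h2m
  refine ⟨?_, ?_, ?_⟩
  · rw [hRsq]; field_simp
  · intro hsb hs'
    have key : R (x + 1) * R x * (Real.sin (θ x + k) * Real.cos (θ (x + 1)))
        = R (x + 1) * R x *
          ((Real.cos (θ x + k) + v * Real.sin (θ x + k)) * Real.sin (θ (x + 1))) := by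
      linear_combination (R x * Real.sin (θ x + k)) * hC
        - (R x * Real.cos (θ x + k) + v * (R x * Real.sin (θ x + k))) * hS
    have key2 := mul_left_cancel₀ (mul_ne_zero hR'.ne' hR.ne') key
    rw [Real.cot_eq_cos_div_sin, Real.cot_eq_cos_div_sin]
    field_simp
    linear_combination key2
  · intro hV
    have hv0 : v = 0 := by rw [hv, hV]; simp
    have hsq : (R (x + 1)) ^ 2 = (R x) ^ 2 := by rw [hRsq, hv0]; ring
    have hRR : R (x + 1) = R x := by
      have h2 : (R (x + 1) - R x) * (R (x + 1) + R x) = 0 := by linear_combination hsq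
      rcases mul_eq_zero.mp h2 with h | h
      · linarith
      · linarith
    refine ⟨hRR, ?_⟩
    rw [hRR] at hC hS
    rw [hv0] at hC
    have hcs : Real.cos (θ (x + 1)) = Real.cos (θ x + k) :=
      mul_left_cancel₀ hR.ne' (by linear_combination hC)
    have hss : Real.sin (θ (x + 1)) = Real.sin (θ x + k) :=
      mul_left_cancel₀ hR.ne' (by linear_combination hS)
    have h1 : Real.cos (θ (x + 1) - (θ x + k)) = 1 := by
      rw [Real.cos_sub, hcs, hss]; linear_combination pythb
    obtain ⟨n, hn⟩ := Real.cos_eq_one_iff _ |>.mp h1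
    exact ⟨2 * n, by push_cast; linarith⟩
end
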